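/- arXiv:math/9804064 — 8 statements merged into one kernel-verified Lean document; each statement's English description precedes it below -/
import Mathlib

section
/- Let X be a closed subspace of a Banach space Y with Y/X finite-dimensional, let F be a finite-dimensional subspace of Y with X ⊕ F = Y (algebraic and topological direct sum), and let P : Y → Y be the projection onto F with kernel X. Let (Z_n) be Banach spaces and (T_n) a sequence of operators T_n : Y → Z_n with sup_n ‖T_n‖ ≤ 1 such that ‖T_n x‖ → 0 for every x ∈ X. Then limsup_{n→∞} ‖T_n ∘ P‖ ≤ 1. -/
open Filter Topology

theorem stmt2 {Y : Type*} [NormedAddCommGroup Y] [NormedSpace ℝ Y] [CompleteSpace Y]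
    (X F : Subspace ℝ Y) (hX : IsClosed (X : Set Y))
    [FiniteDimensional ℝ (Y ⧸ X)] [FiniteDimensional ℝ F]
    (hXF_inf : X ⊓ F = ⊥) (hXF_sup : X ⊔ F = ⊤)
    (P : Y →L[ℝ] Y) (hPF : ∀ y, P y ∈ F) (hPid : ∀ f ∈ F, P f = f)
    (hPX : ∀ x ∈ X, P x = 0)
    (Z : ℕ → Type*) [∀ n, NormedAddCommGroup (Z n)] [∀ n, NormedSpace ℝ (Z n)]
    [∀ n, CompleteSpace (Z n)]
    (T : ∀ n, Y →L[ℝ] Z n) (hT1 : ∀ n, ‖T n‖ ≤ 1)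
    (hTX : ∀ x ∈ X, Tendsto (fun n => ‖T n x‖) atTop (𝓝 0)) :
    limsup (fun n => ‖(T n).comp P‖) atTop ≤ 1 := by
  -- every y decomposes as x + P y with x ∈ X
  have hdec : ∀ y : Y, y - P y ∈ X := by
    intro y
    have hy : y ∈ X ⊔ F := hXF_sup ▸ Submodule.mem_top
    obtain ⟨x, hx, f, hf, rfl⟩ := Submodule.mem_sup.mp hy
    have : P (x + f) = f := by rw [map_add, hPX x hx, hPid f hf, zero_add]
    rw [this]; simpa using hx
  -- T n contracts
  have hTle : ∀ n (z : Y), ‖T n z‖ ≤ ‖z‖ := fun n z => by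
    calc ‖T n z‖ ≤ ‖T n‖ * ‖z‖ := (T n).le_opNorm z
    _ ≤ 1 * ‖z‖ := by gcongr <;> first | exact hT1 n | exact norm_nonneg z
    _ = ‖z‖ := one_mul _
  -- the image of the unit ball under P is totally bounded
  set S : Set Y := P '' Metric.closedBall 0 1 with hS
  have hStb : TotallyBounded S := by
    have hproper : ProperSpace F := FiniteDimensional.proper ℝ F
    set Pc : Y →L[ℝ] F := P.codRestrict F hPF with hPc
    have hBdd : Bornology.IsBounded (Pc '' Metric.closedBall 0 1) :=
      (Pc.lipschitz).isBounded_image Metric.isBounded_closedBall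
    have hcpt : IsCompact (closure (Pc '' Metric.closedBall 0 1)) :=
      hBdd.isCompact_closure
    have htb : TotallyBounded (Pc '' Metric.closedBall 0 1) :=
      hcpt.totallyBounded.subset subset_closure
    have : S = Subtype.val '' (Pc '' Metric.closedBall 0 1) := by
      rw [hS, ← Set.image_comp]; rfl
    rw [this]
    exact htb.image uniformContinuous_subtype_val
  refine le_of_forall_pos_le_add ?_
  intro ε hε
  have hcb : IsCoboundedUnder (· ≤ ·) atTop (fun n => ‖(T n).comp P‖) :=
    isCoboundedUnder_le_of_le atTop fun n => norm_nonneg _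
  refine limsup_le_of_le hcb ?_
  -- finite ε/2-net t ⊆ S
  obtain ⟨t, htS, htfin, htcov⟩ := totallyBounded_iff_subset.mp hStb
    {p : Y × Y | dist p.1 p.2 < ε / 2} (Metric.dist_mem_uniformity (by linarith))
  -- choice of preimages
  have hchoose : ∀ k ∈ t, ∃ y : Y, ‖y‖ ≤ 1 ∧ P y = k := by
    intro k hk
    obtain ⟨y, hy, hPy⟩ := htS hk
    exact ⟨y, by simpa using Metric.mem_closedBall.mp hy, hPy⟩
  classical
  set g : Y → Y := fun k => if h : ∃ y : Y, ‖y‖ ≤ 1 ∧ P y = k then h.choose else 0 with hg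
  have hgspec : ∀ k ∈ t, ‖g k‖ ≤ 1 ∧ P (g k) = k := by
    intro k hk
    have h := hchoose k hk
    simp only [hg, dif_pos h]
    exact h.choose_spec
  -- eventually, all the x_k are small under T n
  have hev : ∀ᶠ n in atTop, ∀ k ∈ t, ‖T n (g k - k)‖ < ε / 2 := by
    rw [eventually_all_finite htfin]
    intro k hk
    have hxk : g k - k ∈ X := by
      have := (hgspec k hk).2
      have h2 := hdec (g k)
      rwa [this] at h2
    have := hTX _ hxk
    exact this.eventually_lt_const (by linarith)
  filter_upwards [hev] with n hn
  -- operator norm bound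
  refine ContinuousLinearMap.opNorm_le_of_unit_norm (by linarith) ?_
  intro y hy
  have hyS : P y ∈ S := ⟨y, Metric.mem_closedBall.mpr (by simp [hy]), rfl⟩
  obtain ⟨k, hk, hdist⟩ := Set.mem_iUnion₂.mp (htcov hyS)
  obtain ⟨hgk1, hgk2⟩ := hgspec k hk
  have hsplit : P y = (P y - k) + g k - (g k - k) := by abel
  calc ‖((T n).comp P) y‖ = ‖T n (P y)‖ := rfl
    _ = ‖T n ((P y - k) + g k - (g k - k))‖ := by rw [← hsplit]
    _ = ‖T n (P y - k) + T n (g k) - T n (g k - k)‖ := by rw [map_sub, map_add]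
    _ ≤ ‖T n (P y - k) + T n (g k)‖ + ‖T n (g k - k)‖ := norm_sub_le _ _
    _ ≤ ‖T n (P y - k)‖ + ‖T n (g k)‖ + ‖T n (g k - k)‖ := by
        gcongr; exact norm_add_le _ _
    _ ≤ ‖P y - k‖ + ‖g k‖ + ‖T n (g k - k)‖ := by gcongr <;> exact hTle n _
    _ ≤ ε / 2 + 1 + ε / 2 := by
        gcongr
        · exact le_of_lt (by simpa [dist_eq_norm] using hdist)
        · exact le_of_lt (hn k hk)
    _ = 1 + ε := by ring
end

section
/- Let X be a closed subspace of a Banach space Y with Y/X finite-dimensional, let (Z_j) be a sequence of Banach spaces, and let T : Y → (⊕_j Z_j)_{ℓ^∞} be a bounded linear operator with T(X) ⊆ (⊕_j Z_j)_{c_0}. Then for every ε > 0 there exists a bounded linear operator T̃ : Y → (⊕_j Z_j)_{c_0} extending T|X with ‖T̃‖ ≤ (2+ε)‖T‖. -/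
/-! Choose a bounded linear section `L` of the quotient map `q : Y → Y ⧸ X` (possible because
`Y ⧸ X` is finite-dimensional) and put `T̃ = T - P_N T L q`, where `P_N` kills the first `N`
coordinates. Then `T̃ y = T (y - L q y) + (1 - P_N) T L q y` lies in `c₀`, and `T̃ = T` on `X`.
Since `T` maps `X` into `c₀`, the tail `P_N T L v` eventually has norm at most `‖T‖ ‖v‖ + δ`
for each single `v`; compactness of the unit ball of `Y ⧸ X` makes one `N` work for all `v`,
giving `‖P_N T L‖ ≤ (1 + ε) ‖T‖` and hence `‖T̃‖ ≤ (2 + ε) ‖T‖`. -/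

open Filter Topology ENNReal

noncomputable def c0Submodule (Z : ℕ → Type*) [∀ j, NormedAddCommGroup (Z j)]
    [∀ j, NormedSpace ℝ (Z j)] : Submodule ℝ (lp Z ∞) where
  carrier := {f | Tendsto (fun j => ‖(f : ∀ j, Z j) j‖) atTop (𝓝 0)}
  add_mem' := by
    intro f g hf hg
    have h := hf.add hg
    rw [add_zero] at h
    refine squeeze_zero (fun j => norm_nonneg _) (fun j => ?_) h
    simp only [lp.coeFn_add, Pi.add_apply]
    exact norm_add_le _ _
  zero_mem' := by
    simp only [Set.mem_setOf_eq, lp.coeFn_zero, Pi.zero_apply, norm_zero]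
    exact tendsto_const_nhds
  smul_mem' := by
    intro c f hf
    have h := hf.const_mul ‖c‖
    rw [mul_zero] at h
    refine squeeze_zero (fun j => norm_nonneg _) (fun j => ?_) h
    simp only [lp.coeFn_smul, Pi.smul_apply]
    rw [norm_smul]


lemma mul_div_two_mul_add_one_le {a δ : ℝ} (ha : 0 ≤ a) (hδ : 0 ≤ δ) :
    a * (δ / (2 * (a + 1))) ≤ δ / 2 := by
  rw [mul_div_assoc', div_le_div_iff₀ (by positivity) two_pos]
  nlinarith

section Tail

variable {Z : ℕ → Type*} [∀ j, NormedAddCommGroup (Z j)]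

lemma memℓp_infty_ite_le (f : lp Z ∞) (N : ℕ) :
    Memℓp (fun j => if N ≤ j then (f : ∀ j, Z j) j else 0) ∞ := by
  refine memℓp_infty ⟨‖f‖, ?_⟩
  rintro _ ⟨j, rfl⟩
  dsimp only
  split_ifs
  · exact lp.norm_apply_le_norm ENNReal.top_ne_zero f j
  · simp

variable [∀ j, NormedSpace ℝ (Z j)]

variable (Z) in
noncomputable def tailProj (N : ℕ) : lp Z ∞ →L[ℝ] lp Z ∞ :=
  LinearMap.mkContinuous
    { toFun := fun f => ⟨_, memℓp_infty_ite_le f N⟩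
      map_add' := fun f g => by
        ext j
        show (if N ≤ j then (f + g : ∀ j, Z j) j else 0) =
          (if N ≤ j then (f : ∀ j, Z j) j else 0) + (if N ≤ j then (g : ∀ j, Z j) j else 0)
        split_ifs <;> simp
      map_smul' := fun c f => by
        ext j
        by_cases h : N ≤ j <;> simp [h] }
    1 (fun f => by
      refine lp.norm_le_of_forall_le (by positivity) fun j => ?_
      dsimp only [LinearMap.coe_mk, AddHom.coe_mk]
      split_ifs
      · simpa using lp.norm_apply_le_norm ENNReal.top_ne_zero f j
      · simp)

lemma tailProj_apply (N : ℕ) (f : lp Z ∞) (j : ℕ) :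
    (tailProj Z N f : ∀ j, Z j) j = if N ≤ j then (f : ∀ j, Z j) j else 0 :=
  rfl

lemma norm_tailProj_le_of_forall_le {N : ℕ} {f : lp Z ∞} {C : ℝ} (hC : 0 ≤ C)
    (hf : ∀ j, N ≤ j → ‖(f : ∀ j, Z j) j‖ ≤ C) : ‖tailProj Z N f‖ ≤ C := by
  refine lp.norm_le_of_forall_le hC fun j => ?_
  rw [tailProj_apply]
  split_ifs with hj
  · exact hf j hj
  · simpa using hC

lemma norm_tailProj_apply_le (N : ℕ) (f : lp Z ∞) : ‖tailProj Z N f‖ ≤ ‖f‖ :=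
  norm_tailProj_le_of_forall_le (norm_nonneg f) fun j _ =>
    lp.norm_apply_le_norm ENNReal.top_ne_zero f j

lemma sub_tailProj_mem_c0Submodule (N : ℕ) (f : lp Z ∞) : f - tailProj Z N f ∈ c0Submodule Z := by
  refine tendsto_const_nhds.congr' ?_
  filter_upwards [eventually_ge_atTop N] with j hj
  simp [tailProj_apply, hj]

lemma eventually_norm_tailProj_le_of_mem_c0Submodule {f : lp Z ∞} (hf : f ∈ c0Submodule Z)
    {δ : ℝ} (hδ : 0 < δ) : ∀ᶠ N in atTop, ‖tailProj Z N f‖ ≤ δ := by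
  obtain ⟨N, hN⟩ := eventually_atTop.1 ((hf : Tendsto _ _ _).eventually (ge_mem_nhds hδ))
  filter_upwards [eventually_ge_atTop N] with N' hN'
  exact norm_tailProj_le_of_forall_le hδ.le fun j hj => hN j (hN'.trans hj)

lemma exists_norm_tailProj_comp_le {V : Type*} [NormedAddCommGroup V] [NormedSpace ℝ V]
    [FiniteDimensional ℝ V] (S : V →L[ℝ] lp Z ∞) {M : ℝ} (hM : 0 ≤ M)
    (hS : ∀ v, ∀ δ > 0, ∀ᶠ N in atTop, ‖tailProj Z N (S v)‖ ≤ M * ‖v‖ + δ)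
    {δ : ℝ} (hδ : 0 < δ) : ∃ N, ‖(tailProj Z N).comp S‖ ≤ M + δ := by
  set r := δ / (2 * (‖S‖ + 1))
  have hr : 0 < r := by positivity
  obtain ⟨t, ht_ball, ht_fin, ht_cover⟩ := Metric.finite_approx_of_totallyBounded
    (isCompact_closedBall (0 : V) 1).totallyBounded r hr
  obtain ⟨N, hN⟩ :=
    ((eventually_all_finite ht_fin).2 fun v _ => hS v (δ / 2) (half_pos hδ)).exists
  refine ⟨N, ((tailProj Z N).comp S).opNorm_le_of_unit_norm (by positivity) fun v hv => ?_⟩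
  obtain ⟨w, hwt, hvw⟩ := Set.mem_iUnion₂.1 (ht_cover (mem_closedBall_zero_iff.2 hv.le))
  have hw : ‖w‖ ≤ 1 := by simpa using ht_ball hwt
  have hvw : ‖tailProj Z N (S (v - w))‖ ≤ δ / 2 := calc
    ‖tailProj Z N (S (v - w))‖ ≤ ‖S‖ * ‖v - w‖ :=
      (norm_tailProj_apply_le N _).trans (S.le_opNorm _)
    _ ≤ ‖S‖ * r := by gcongr; exact (dist_eq_norm v w ▸ Metric.mem_ball.1 hvw).le
    _ ≤ δ / 2 := mul_div_two_mul_add_one_le (norm_nonneg S) hδ.le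
  calc ‖tailProj Z N (S v)‖ = ‖tailProj Z N (S w) + tailProj Z N (S (v - w))‖ := by
        rw [← map_add, ← map_add, add_sub_cancel]
    _ ≤ (M * ‖w‖ + δ / 2) + δ / 2 := norm_add_le_of_le (hN w hwt) hvw
    _ ≤ M + δ := by nlinarith

end Tail

section Extension

variable {Z : ℕ → Type*} [∀ j, NormedAddCommGroup (Z j)] [∀ j, NormedSpace ℝ (Z j)]
  {Y : Type*} [NormedAddCommGroup Y] [NormedSpace ℝ Y] {X : Submodule ℝ Y}
  {T : Y →L[ℝ] lp Z ∞}

lemma eventually_norm_tailProj_le_norm_mkQ (hTX : ∀ x ∈ X, T x ∈ c0Submodule Z) (y : Y)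
    {δ : ℝ} (hδ : 0 < δ) : ∀ᶠ N in atTop, ‖tailProj Z N (T y)‖ ≤ ‖T‖ * ‖X.mkQ y‖ + δ := by
  have hr : 0 < δ / (2 * (‖T‖ + 1)) := by positivity
  obtain ⟨m, hm, hm_lt⟩ := Submodule.Quotient.norm_mk_lt (X.mkQ y) hr
  have hTm : ‖T m‖ ≤ ‖T‖ * ‖X.mkQ y‖ + δ / 2 := calc
    ‖T m‖ ≤ ‖T‖ * ‖m‖ := T.le_opNorm m
    _ ≤ ‖T‖ * (‖X.mkQ y‖ + δ / (2 * (‖T‖ + 1))) := by gcongr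
    _ ≤ ‖T‖ * ‖X.mkQ y‖ + δ / 2 := by
      rw [mul_add]
      gcongr
      exact mul_div_two_mul_add_one_le (norm_nonneg T) hδ.le
  have hyX : y - m ∈ X := (Submodule.Quotient.eq X).1 hm.symm
  filter_upwards [eventually_norm_tailProj_le_of_mem_c0Submodule (hTX _ hyX) (half_pos hδ)]
    with N hN
  calc ‖tailProj Z N (T y)‖ = ‖tailProj Z N (T (y - m)) + tailProj Z N (T m)‖ := by
        rw [← map_add, ← map_add, sub_add_cancel]
    _ ≤ δ / 2 + (‖T‖ * ‖X.mkQ y‖ + δ / 2) :=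
      norm_add_le_of_le hN ((norm_tailProj_apply_le N (T m)).trans hTm)
    _ = ‖T‖ * ‖X.mkQ y‖ + δ := by ring

lemma exists_norm_tailProj_comp_le_of_mkQ_rightInverse [IsClosed (X : Set Y)]
    [FiniteDimensional ℝ (Y ⧸ X)] (hTX : ∀ x ∈ X, T x ∈ c0Submodule Z)
    {L : (Y ⧸ X) →L[ℝ] Y} (hL : ∀ v, X.mkQ (L v) = v)
    {ε : ℝ} (hε : 0 < ε) : ∃ N, ‖(tailProj Z N).comp (T.comp L)‖ ≤ (1 + ε) * ‖T‖ := by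
  rcases (norm_nonneg T).eq_or_lt with hT | hT
  · refine ⟨0, ?_⟩
    simp [norm_eq_zero.1 hT.symm, ContinuousLinearMap.opNorm_zero]
  · have hTL (v : Y ⧸ X) (δ : ℝ) (hδ : δ > 0) :
        ∀ᶠ N in atTop, ‖tailProj Z N (T (L v))‖ ≤ ‖T‖ * ‖v‖ + δ := by
      simpa only [hL] using eventually_norm_tailProj_le_norm_mkQ hTX (L v) hδ
    simpa [add_mul] using exists_norm_tailProj_comp_le (T.comp L) (norm_nonneg T) hTL
      (mul_pos hε hT)

lemma exists_c0_extension_of_norm_tailProj_comp_le (hTX : ∀ x ∈ X, T x ∈ c0Submodule Z)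
    {L : (Y ⧸ X) →L[ℝ] Y} (hL : ∀ v, X.mkQ (L v) = v) {N : ℕ} {C : ℝ}
    (hN : ‖(tailProj Z N).comp (T.comp L)‖ ≤ C) :
    ∃ T' : Y →L[ℝ] c0Submodule Z, (∀ x ∈ X, (T' x : lp Z ∞) = T x) ∧ ‖T'‖ ≤ ‖T‖ + C := by
  set A := (tailProj Z N).comp (T.comp L)
  set S := T - A.comp X.mkQL
  have hS_mem (y : Y) : S y ∈ c0Submodule Z := by
    have hyX : y - L (X.mkQ y) ∈ X := by
      rw [← Submodule.Quotient.mk_eq_zero, ← Submodule.mkQ_apply, map_sub, hL, sub_self]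
    have hS : S y = T (y - L (X.mkQ y)) + (T (L (X.mkQ y)) - A (X.mkQ y)) := by
      simp [S, map_sub]
    exact hS ▸ add_mem (hTX _ hyX) (sub_tailProj_mem_c0Submodule N _)
  refine ⟨S.codRestrict _ hS_mem, fun x hx => ?_, ?_⟩
  · simp [S, (Submodule.Quotient.mk_eq_zero X).2 hx]
  · refine ContinuousLinearMap.opNorm_le_bound _ (by positivity [(norm_nonneg A).trans hN])
      fun y => ?_
    calc ‖S y‖ ≤ ‖T y‖ + ‖A (X.mkQ y)‖ := norm_sub_le _ _
      _ ≤ ‖T‖ * ‖y‖ + C * ‖y‖ := by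
        gcongr
        · exact T.le_opNorm y
        · exact (A.le_opNorm _).trans (mul_le_mul hN (Submodule.Quotient.norm_mk_le X y)
            (norm_nonneg _) ((norm_nonneg A).trans hN))
      _ = (‖T‖ + C) * ‖y‖ := by ring

end Extension

theorem stmt3_general {Y : Type*} [NormedAddCommGroup Y] [NormedSpace ℝ Y]
    (X : Subspace ℝ Y) (hX : IsClosed (X : Set Y)) [FiniteDimensional ℝ (Y ⧸ X)]
    (Z : ℕ → Type*) [∀ j, NormedAddCommGroup (Z j)] [∀ j, NormedSpace ℝ (Z j)]
    (T : Y →L[ℝ] lp Z ∞) (hTX : ∀ x ∈ X, T x ∈ c0Submodule Z) :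
    ∀ ε > (0 : ℝ), ∃ T' : Y →L[ℝ] ↥(c0Submodule Z),
      (∀ x ∈ X, (T' x : lp Z ∞) = T x) ∧ ‖T'‖ ≤ (2 + ε) * ‖T‖ := by
  intro ε hε
  have : IsClosed (X : Set Y) := hX
  obtain ⟨s, hs⟩ := X.mkQ.exists_rightInverse_of_surjective X.range_mkQ
  have hL (v : Y ⧸ X) : X.mkQ (LinearMap.toContinuousLinearMap s v) = v :=
    LinearMap.congr_fun hs v
  obtain ⟨N, hN⟩ := exists_norm_tailProj_comp_le_of_mkQ_rightInverse hTX hL hε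
  obtain ⟨T', hT'X, hT'⟩ := exists_c0_extension_of_norm_tailProj_comp_le hTX hL hN
  exact ⟨T', hT'X, hT'.trans_eq (by ring)⟩

theorem stmt3 {Y : Type*} [NormedAddCommGroup Y] [NormedSpace ℝ Y] [CompleteSpace Y]
    (X : Subspace ℝ Y) (hX : IsClosed (X : Set Y)) [FiniteDimensional ℝ (Y ⧸ X)]
    (Z : ℕ → Type*) [∀ j, NormedAddCommGroup (Z j)] [∀ j, NormedSpace ℝ (Z j)]
    [∀ j, CompleteSpace (Z j)]
    (T : Y →L[ℝ] lp Z ∞) (hTX : ∀ x ∈ X, T x ∈ c0Submodule Z) :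
    ∀ ε > (0 : ℝ), ∃ T' : Y →L[ℝ] ↥(c0Submodule Z),
      (∀ x ∈ X, (T' x : lp Z ∞) = T x) ∧ ‖T'‖ ≤ (2 + ε) * ‖T‖ :=
  stmt3_general X hX Z T hTX
end

section
/- Let Z_1, Z_2, ... be 1-injective Banach spaces, X ⊆ Y Banach spaces with Y/X separable, and suppose (T_j) is a sequence of bounded operators T_j : Y → Z_j with sup_j ‖T_j‖ = 1 and ‖T_j x‖ → 0 for every x ∈ X. Then for every ε > 0 there exist bounded operators S_j : Y → Z_j with X ⊆ ker S_j, ‖S_j‖ ≤ 1 + ε/2 for all j, and ‖(T_j − S_j)(y)‖ → 0 for every y ∈ Y. -/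
open Filter Topology

/-- A Banach space `W` is 1-injective: every bounded operator into `W` from a closed
subspace of any Banach space extends with the same norm. -/
def IsOneInjective (W : Type*) [NormedAddCommGroup W] [NormedSpace ℝ W] : Prop :=
  ∀ (B : Type) [NormedAddCommGroup B] [NormedSpace ℝ B] [CompleteSpace B]
    (A : Subspace ℝ B), IsClosed (A : Set B) →
    ∀ S : ↥A →L[ℝ] W, ∃ S' : B →L[ℝ] W, (∀ a : ↥A, S' a = S a) ∧ ‖S'‖ = ‖S‖

open scoped ENNReal lp

/-!
For every `y`, eventually `‖T j y‖ < ‖y + X‖ + δ`: write `y = x + m` with `x ∈ X`, `‖m‖` close to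
`‖y + X‖`, and use `T j x → 0`. Since `‖T j‖ ≤ 1` this holds uniformly on compact sets, so
`u ↦ T j (L u)`, for a linear section `L` of the quotient map, eventually has norm at most
`1 + ε / 2` on each finite-dimensional subspace of `Y ⧸ X`. Exhausting the span of a dense
sequence by finite-dimensional subspaces and choosing them diagonally, these restrictions extend
(through an isometric embedding of the separable space `Y ⧸ X` into `ℓ^∞`, and 1-injectivity) to
operators `R j` on `Y ⧸ X` of norm at most `1 + ε / 2`. Then `S j = R j ∘ (Y → Y ⧸ X)` agrees with
`T j` on lifts of more and more points of a dense set, and the uniform bound gives `T j - S j → 0`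
strongly.
-/

theorem Real.le_of_iSup_eq_of_ne_zero {ι : Sort*} {f : ι → ℝ} {c : ℝ} (h : ⨆ i, f i = c)
    (hc : c ≠ 0) (i : ι) : f i ≤ c := by
  have hbdd : BddAbove (Set.range f) := by
    by_contra hf
    exact hc ((Real.iSup_of_not_bddAbove hf).symm.trans h).symm
  exact h ▸ le_ciSup hbdd i

theorem exists_tendsto_atTop_forall_of_eventually {P : ℕ → ℕ → Prop} (h0 : ∀ j, P 0 j)
    (h : ∀ n, ∀ᶠ j in atTop, P n j) : ∃ n : ℕ → ℕ, Tendsto n atTop atTop ∧ ∀ j, P (n j) j := by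
  choose N hN using fun n => eventually_atTop.mp (h n)
  classical
  let Q n j := n = 0 ∨ N n ≤ j
  have hQ : ∀ j, Q (Nat.findGreatest (Q · j) j) j := fun j =>
    Nat.findGreatest_spec (P := (Q · j)) (Nat.zero_le j) (Or.inl rfl)
  refine ⟨fun j => Nat.findGreatest (Q · j) j, ?_, fun j => ?_⟩
  · refine tendsto_atTop_atTop.2 fun n => ⟨max n (N n), fun j hj => ?_⟩
    exact Nat.le_findGreatest (le_of_max_le_left hj) (Or.inr (le_of_max_le_right hj))
  · rcases hQ j with h | h
    · exact (congrArg (P · j) h).mpr (h0 j)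
    · exact hN _ j h

theorem Submodule.opNorm_comp_mkQL_le {Y W : Type*} [NormedAddCommGroup Y] [NormedSpace ℝ Y]
    [NormedAddCommGroup W] [NormedSpace ℝ W] (X : Submodule ℝ Y) (R : (Y ⧸ X) →L[ℝ] W) :
    ‖R.comp X.mkQL‖ ≤ ‖R‖ :=
  ContinuousLinearMap.opNorm_le_bound _ R.opNorm_nonneg fun y =>
    (R.le_opNorm _).trans (by gcongr; exact Submodule.Quotient.norm_mk_le X y)

section Embedding

variable {E : Type*} [SeminormedAddCommGroup E] [NormedSpace ℝ E]

theorem exists_norming_seq_strongDual [TopologicalSpace.SeparableSpace E] :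
    ∃ g : ℕ → StrongDual ℝ E, (∀ k, ‖g k‖ ≤ 1) ∧ ∀ v, ⨆ k, ‖g k v‖ = ‖v‖ := by
  obtain ⟨d, hd⟩ := TopologicalSpace.exists_dense_seq E
  choose g hg_norm hg_apply using fun k => exists_dual_vector'' ℝ (d k)
  have hle : ∀ v k, ‖g k v‖ ≤ ‖v‖ := fun v k =>
    ((g k).le_of_opNorm_le (hg_norm k) v).trans_eq (one_mul _)
  refine ⟨g, hg_norm, fun v => ciSup_eq_of_forall_le_of_forall_lt_exists_gt (hle v) fun r hr => ?_⟩
  obtain ⟨k, hk⟩ := Metric.denseRange_iff.mp hd v ((‖v‖ - r) / 2) (by linarith)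
  rw [dist_eq_norm] at hk
  have hgk : ‖d k‖ - ‖v - d k‖ ≤ g k v := by
    have h := neg_le_of_abs_le (Real.norm_eq_abs _ ▸ hle (v - d k) k)
    rw [map_sub, hg_apply, RCLike.ofReal_real_eq_id, id] at h
    linarith
  refine ⟨k, lt_of_lt_of_le ?_ (hgk.trans (Real.le_norm_self _))⟩
  linarith [norm_le_insert' v (d k)]

theorem exists_linearIsometry_lpInfty [TopologicalSpace.SeparableSpace E] :
    Nonempty (E →ₗᵢ[ℝ] ℓ^∞(ℕ, ℝ)) := by
  obtain ⟨g, hg_norm, hg_sup⟩ := exists_norming_seq_strongDual (E := E)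
  have hmem : ∀ v, Memℓp (fun k => g k v) ∞ := fun v => memℓp_infty ⟨‖v‖, by
    rintro _ ⟨k, rfl⟩; exact ((g k).le_of_opNorm_le (hg_norm k) v).trans_eq (one_mul _)⟩
  let φ : E →ₗ[ℝ] ℓ^∞(ℕ, ℝ) :=
    (LinearMap.pi fun k => (g k : E →ₗ[ℝ] ℝ)).codRestrict (lpSubmodule ℝ (fun _ : ℕ => ℝ) ∞) hmem
  exact ⟨⟨φ, fun v => (lp.norm_eq_ciSup (φ v)).trans (hg_sup v)⟩⟩

end Embedding

section Extension

variable {W : Type*} [NormedAddCommGroup W] [NormedSpace ℝ W]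

theorem IsOneInjective.exists_extension_along_linearIsometry (hW : IsOneInjective W)
    {F : Type*} [NormedAddCommGroup F] [NormedSpace ℝ F] [CompleteSpace F]
    {B : Type} [NormedAddCommGroup B] [NormedSpace ℝ B] [CompleteSpace B]
    (ι : F →ₗᵢ[ℝ] B) (g : F →L[ℝ] W) :
    ∃ R : B →L[ℝ] W, ‖R‖ = ‖g‖ ∧ ∀ u, R (ι u) = g u := by
  let e := ι.equivRange
  have hclosed : IsClosed (LinearMap.range ι.toLinearMap : Set B) :=
    ι.isometry.isUniformInducing.isComplete_range.isClosed
  obtain ⟨R, hR_ext, hR_norm⟩ :=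
    hW B _ hclosed (g.comp e.symm.toLinearIsometry.toContinuousLinearMap)
  refine ⟨R, hR_norm.trans (g.opNorm_comp_linearIsometryEquiv e.symm), fun u => ?_⟩
  simpa [e] using hR_ext (e u)

theorem IsOneInjective.exists_extension_of_separableSpace (hW : IsOneInjective W)
    {V : Type*} [NormedAddCommGroup V] [NormedSpace ℝ V] [TopologicalSpace.SeparableSpace V]
    (F : Submodule ℝ V) [CompleteSpace F] (g : F →L[ℝ] W) :
    ∃ R : V →L[ℝ] W, ‖R‖ ≤ ‖g‖ ∧ ∀ u : F, R u = g u := by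
  obtain ⟨ι⟩ := exists_linearIsometry_lpInfty (E := V)
  obtain ⟨R, hR_norm, hR_ext⟩ := hW.exists_extension_along_linearIsometry (ι.comp F.subtypeₗᵢ) g
  refine ⟨R.comp ι.toContinuousLinearMap, ?_, hR_ext⟩
  calc ‖R.comp ι.toContinuousLinearMap‖ ≤ ‖R‖ * 1 :=
        R.opNorm_comp_le _ |>.trans (by gcongr; exact ι.norm_toContinuousLinearMap_le)
    _ = ‖g‖ := by rw [mul_one, hR_norm]

end Extension

section StrongNull

variable {Y : Type*} [NormedAddCommGroup Y] [NormedSpace ℝ Y] {X : Submodule ℝ Y}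
  {Z : ℕ → Type*} [∀ j, NormedAddCommGroup (Z j)] [∀ j, NormedSpace ℝ (Z j)]
  {T : ∀ j, Y →L[ℝ] Z j}

theorem eventually_norm_apply_lt_norm_mk_add (hT : ∀ j, ‖T j‖ ≤ 1)
    (hTX : ∀ x ∈ X, Tendsto (fun j => ‖T j x‖) atTop (𝓝 0)) (y : Y) {δ : ℝ} (hδ : 0 < δ) :
    ∀ᶠ j in atTop, ‖T j y‖ < ‖(Submodule.Quotient.mk y : Y ⧸ X)‖ + δ := by
  obtain ⟨m, hm_mk, hm_norm⟩ :=
    Submodule.Quotient.norm_mk_lt (Submodule.Quotient.mk y : Y ⧸ X) (half_pos hδ)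
  have hym : y - m ∈ X := (Submodule.Quotient.eq X).mp hm_mk.symm
  filter_upwards [(hTX _ hym).eventually_lt_const (half_pos hδ)] with j hj
  calc ‖T j y‖ = ‖T j (y - m) + T j m‖ := by rw [← map_add, sub_add_cancel]
    _ ≤ ‖T j (y - m)‖ + ‖m‖ :=
        norm_add_le_of_le le_rfl (((T j).le_of_opNorm_le (hT j) m).trans_eq (one_mul _))
    _ < _ := by linarith

theorem eventually_forall_norm_apply_lt_norm_mk_add (hT : ∀ j, ‖T j‖ ≤ 1)
    (hTX : ∀ x ∈ X, Tendsto (fun j => ‖T j x‖) atTop (𝓝 0)) {K : Set Y} (hK : IsCompact K)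
    {δ : ℝ} (hδ : 0 < δ) :
    ∀ᶠ j in atTop, ∀ y ∈ K, ‖T j y‖ < ‖(Submodule.Quotient.mk y : Y ⧸ X)‖ + δ := by
  obtain ⟨t, -, ht, hKt⟩ := hK.finite_cover_balls (div_pos hδ three_pos)
  filter_upwards [(ht.eventually_all).2 fun c _ =>
    eventually_norm_apply_lt_norm_mk_add hT hTX c (div_pos hδ three_pos)] with j hj y hy
  obtain ⟨c, hc, hyc⟩ := Set.mem_iUnion₂.mp (hKt hy)
  rw [Metric.mem_ball, dist_eq_norm] at hyc
  have hTyc : ‖T j (y - c)‖ ≤ ‖y - c‖ := ((T j).le_of_opNorm_le (hT j) _).trans_eq (one_mul _)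
  have hmk : ‖(Submodule.Quotient.mk c : Y ⧸ X)‖ ≤
      ‖(Submodule.Quotient.mk y : Y ⧸ X)‖ + ‖y - c‖ := calc
    _ = ‖(Submodule.Quotient.mk y - Submodule.Quotient.mk (y - c) : Y ⧸ X)‖ := by
      rw [← Submodule.Quotient.mk_sub, sub_sub_cancel]
    _ ≤ _ := norm_sub_le_of_le le_rfl (Submodule.Quotient.norm_mk_le X _)
  calc ‖T j y‖ = ‖T j c + T j (y - c)‖ := by rw [← map_add, add_sub_cancel]
    _ ≤ ‖T j c‖ + ‖T j (y - c)‖ := norm_add_le _ _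
    _ < _ := by linarith [hj c hc]

theorem eventually_opNorm_comp_le {E : Type*} [NormedAddCommGroup E] [NormedSpace ℝ E]
    [FiniteDimensional ℝ E] (hT : ∀ j, ‖T j‖ ≤ 1)
    (hTX : ∀ x ∈ X, Tendsto (fun j => ‖T j x‖) atTop (𝓝 0)) (L : E →L[ℝ] Y)
    (hL : ∀ u, ‖(Submodule.Quotient.mk (L u) : Y ⧸ X)‖ ≤ ‖u‖) {δ : ℝ} (hδ : 0 < δ) :
    ∀ᶠ j in atTop, ‖(T j).comp L‖ ≤ 1 + δ := by
  filter_upwards [eventually_forall_norm_apply_lt_norm_mk_add hT hTX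
    ((isCompact_closedBall (0 : E) 1).image L.continuous) hδ] with j hj
  refine ContinuousLinearMap.opNorm_le_of_unit_norm (by positivity) fun u hu => ?_
  have hTLu := hj (L u) ⟨u, by simp [hu], rfl⟩
  rw [ContinuousLinearMap.comp_apply]
  linarith [hL u]

theorem tendsto_norm_sub_apply_mk (hT : ∀ j, ‖T j‖ ≤ 1)
    (hTX : ∀ x ∈ X, Tendsto (fun j => ‖T j x‖) atTop (𝓝 0)) {C : ℝ}
    (R : ∀ j, (Y ⧸ X) →L[ℝ] Z j) (hR : ∀ j, ‖R j‖ ≤ C) {z : ℕ → Y}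
    (hz : DenseRange (X.mkQ ∘ z)) (hRz : ∀ k, ∀ᶠ j in atTop, R j (X.mkQ (z k)) = T j (z k))
    (y : Y) : Tendsto (fun j => ‖T j y - R j (X.mkQ y)‖) atTop (𝓝 0) := by
  have hC : 0 ≤ C := (R 0).opNorm_nonneg.trans (hR 0)
  refine NormedAddGroup.tendsto_nhds_zero.2 fun a ha => ?_
  set η := a / (C + 3) with hη_def
  have hη : 0 < η := by positivity
  obtain ⟨k, hk⟩ := Metric.denseRange_iff.mp hz (X.mkQ y) η hη
  set w := y - z k
  have hw : ‖(Submodule.Quotient.mk w : Y ⧸ X)‖ < η := by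
    rwa [Submodule.Quotient.mk_sub, ← dist_eq_norm]
  filter_upwards [hRz k, eventually_norm_apply_lt_norm_mk_add hT hTX w hη] with j hj hTw
  have hRw : ‖R j (X.mkQ w)‖ ≤ C * η := ((R j).le_of_opNorm_le (hR j) _).trans (by gcongr; exact hw.le)
  have hsplit : T j y - R j (X.mkQ y) = T j w - R j (X.mkQ w) := by
    simp only [w, map_sub, hj]; abel
  have hηa : (C + 3) * η = a := by rw [hη_def]; field_simp
  rw [norm_norm, hsplit]
  calc ‖T j w - R j (X.mkQ w)‖ ≤ ‖T j w‖ + ‖R j (X.mkQ w)‖ := norm_sub_le _ _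
    _ < η + η + C * η := by linarith
    _ ≤ a := by linarith

end StrongNull

theorem exists_extensions_eventually_eq_on_seq
    {Z : ℕ → Type*} [∀ j, NormedAddCommGroup (Z j)] [∀ j, NormedSpace ℝ (Z j)]
    (hinj : ∀ j, IsOneInjective (Z j)) {Y : Type*} [NormedAddCommGroup Y] [NormedSpace ℝ Y]
    {X : Submodule ℝ Y} [IsClosed (X : Set Y)] [TopologicalSpace.SeparableSpace (Y ⧸ X)]
    {T : ∀ j, Y →L[ℝ] Z j} (hT : ∀ j, ‖T j‖ ≤ 1)
    (hTX : ∀ x ∈ X, Tendsto (fun j => ‖T j x‖) atTop (𝓝 0))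
    {L : (Y ⧸ X) →ₗ[ℝ] Y} (hL : ∀ v, X.mkQ (L v) = v) (d : ℕ → Y ⧸ X) {δ : ℝ} (hδ : 0 < δ) :
    ∃ R : ∀ j, (Y ⧸ X) →L[ℝ] Z j,
      (∀ j, ‖R j‖ ≤ 1 + δ) ∧ ∀ k, ∀ᶠ j in atTop, R j (d k) = T j (L (d k)) := by
  classical
  let E : ℕ → Submodule ℝ (Y ⧸ X) := fun n => Submodule.span ℝ ((Finset.range n).image d : Set _)
  let L' : ∀ n, E n →L[ℝ] Y := fun n => LinearMap.toContinuousLinearMap (L ∘ₗ (E n).subtype)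
  have hE0 : Subsingleton (E 0) := by
    simp only [E, Finset.range_zero, Finset.image_empty, Finset.coe_empty, Submodule.span_empty]
    infer_instance
  obtain ⟨n, hn_tendsto, hn⟩ := exists_tendsto_atTop_forall_of_eventually
    (P := fun n j => ‖(T j).comp (L' n)‖ ≤ 1 + δ)
    (fun j => ((T j).comp (L' 0)).opNorm_subsingleton.trans_le (by positivity))
    (fun n => eventually_opNorm_comp_le hT hTX (L' n) (fun u => (congrArg norm (hL u)).le) hδ)
  choose R hR_norm hR_ext using fun j =>
    (hinj j).exists_extension_of_separableSpace (E (n j)) ((T j).comp (L' (n j)))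
  refine ⟨R, fun j => (hR_norm j).trans (hn j), fun k => ?_⟩
  filter_upwards [hn_tendsto.eventually_gt_atTop k] with j hj
  have hdk : d k ∈ E (n j) := Submodule.subset_span (by simpa using ⟨k, hj, rfl⟩)
  exact hR_ext j ⟨d k, hdk⟩

theorem stmt5_general (Z : ℕ → Type*) [∀ j, NormedAddCommGroup (Z j)] [∀ j, NormedSpace ℝ (Z j)]
    (hinj : ∀ j, IsOneInjective (Z j))
    {Y : Type*} [NormedAddCommGroup Y] [NormedSpace ℝ Y]
    (X : Subspace ℝ Y) (hX : IsClosed (X : Set Y))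
    [TopologicalSpace.SeparableSpace (Y ⧸ X)]
    (T : ∀ j : ℕ, Y →L[ℝ] Z j) (hTsup : ⨆ j, ‖T j‖ = 1)
    (hTX : ∀ x ∈ X, Tendsto (fun j => ‖T j x‖) atTop (𝓝 0)) :
    ∀ ε > (0 : ℝ), ∃ S : ∀ j : ℕ, Y →L[ℝ] Z j,
      (∀ j, ∀ x ∈ X, S j x = 0) ∧ (∀ j, ‖S j‖ ≤ 1 + ε / 2) ∧
      (∀ y : Y, Tendsto (fun j => ‖T j y - S j y‖) atTop (𝓝 0)) := by
  intro ε hε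
  have := hX
  have hT : ∀ j, ‖T j‖ ≤ 1 := Real.le_of_iSup_eq_of_ne_zero hTsup one_ne_zero
  obtain ⟨L, hL⟩ := X.mkQ.exists_rightInverse_of_surjective X.range_mkQ
  have hmkL : ∀ v, X.mkQ (L v) = v := LinearMap.congr_fun hL
  obtain ⟨d, hd⟩ := TopologicalSpace.exists_dense_seq (Y ⧸ X)
  obtain ⟨R, hR_norm, hR_eq⟩ :=
    exists_extensions_eventually_eq_on_seq hinj hT hTX hmkL d (half_pos hε)
  refine ⟨fun j => (R j).comp X.mkQL, fun j x hx => ?_,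
    fun j => (X.opNorm_comp_mkQL_le (R j)).trans (hR_norm j),
    tendsto_norm_sub_apply_mk hT hTX R hR_norm (z := L ∘ d)
      (by simpa [Function.comp_def, hmkL] using hd) fun k => by simpa [hmkL] using hR_eq k⟩
  simp [(Submodule.Quotient.mk_eq_zero X).2 hx]

theorem stmt5 (Z : ℕ → Type*) [∀ j, NormedAddCommGroup (Z j)] [∀ j, NormedSpace ℝ (Z j)]
    [∀ j, CompleteSpace (Z j)] (hinj : ∀ j, IsOneInjective (Z j))
    {Y : Type*} [NormedAddCommGroup Y] [NormedSpace ℝ Y] [CompleteSpace Y]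
    (X : Subspace ℝ Y) (hX : IsClosed (X : Set Y))
    [TopologicalSpace.SeparableSpace (Y ⧸ X)]
    (T : ∀ j : ℕ, Y →L[ℝ] Z j) (hTsup : ⨆ j, ‖T j‖ = 1)
    (hTX : ∀ x ∈ X, Tendsto (fun j => ‖T j x‖) atTop (𝓝 0)) :
    ∀ ε > (0 : ℝ), ∃ S : ∀ j : ℕ, Y →L[ℝ] Z j,
      (∀ j, ∀ x ∈ X, S j x = 0) ∧ (∀ j, ‖S j‖ ≤ 1 + ε / 2) ∧
      (∀ y : Y, Tendsto (fun j => ‖T j y - S j y‖) atTop (𝓝 0)) :=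
  stmt5_general Z hinj X hX T hTsup hTX
end

section
/- Let Z_1, Z_2, ... be 1-injective Banach spaces, set X = (⊕_j Z_j)_{c_0}, and let Y be a closed subspace of (⊕_j Z_j)_{ℓ^∞} containing X with Y/X separable. Then for every ε > 0 there is a bounded linear projection P from Y onto X with ‖I − P‖ < 1 + ε. -/
open Filter Topology ENNReal

set_option maxHeartbeats 2000000
set_option synthInstance.maxHeartbeats 400000

section Aux

variable {Z : ℕ → Type*} [∀ j, NormedAddCommGroup (Z j)] [∀ j, NormedSpace ℝ (Z j)]

theorem aux_c0_isClosed (Z : ℕ → Type*) [∀ j, NormedAddCommGroup (Z j)]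
    [∀ j, NormedSpace ℝ (Z j)] : IsClosed ({f : lp Z ∞ |
      Tendsto (fun j => ‖(f : ∀ j, Z j) j‖) atTop (𝓝 0)}) := by
  refine isClosed_of_closure_subset fun f hf => ?_
  rw [Set.mem_setOf_eq, Metric.tendsto_atTop]
  intro ε hε
  obtain ⟨g, hg, hfg⟩ := Metric.mem_closure_iff.mp hf (ε / 2) (by linarith)
  rw [Set.mem_setOf_eq, Metric.tendsto_atTop] at hg
  obtain ⟨N, hN⟩ := hg (ε / 2) (by linarith)
  refine ⟨N, fun j hj => ?_⟩
  have h1 : ‖(f : ∀ j, Z j) j - (g : ∀ j, Z j) j‖ ≤ dist f g := by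
    rw [dist_eq_norm]
    simpa [lp.coeFn_sub] using lp.norm_apply_le_norm ENNReal.top_ne_zero (f - g) j
  have h2 := hN j hj
  rw [Real.dist_eq, sub_zero, abs_of_nonneg (norm_nonneg _)] at h2 ⊢
  calc ‖(f : ∀ j, Z j) j‖ ≤ ‖(f : ∀ j, Z j) j - (g : ∀ j, Z j) j‖ + ‖(g : ∀ j, Z j) j‖ := by
        simpa using norm_add_le ((f : ∀ j, Z j) j - (g : ∀ j, Z j) j) ((g : ∀ j, Z j) j)
    _ < ε / 2 + ε / 2 := add_lt_add_of_le_of_lt (h1.trans hfg.le) h2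
    _ = ε := by ring

/-- every separable normed real space embeds linearly isometrically into `ℓ^∞`. -/
theorem aux_exists_embed (Q : Type*) [NormedAddCommGroup Q] [NormedSpace ℝ Q]
    [TopologicalSpace.SeparableSpace Q] :
    Nonempty (Q →ₗᵢ[ℝ] lp (fun _ : ℕ => ℝ) ∞) := by
  obtain ⟨d, hd⟩ := TopologicalSpace.exists_dense_seq Q
  choose g hg1 hg2 using fun n => exists_dual_vector'' ℝ (d n)
  have hbd : ∀ x : Q, ∀ n, ‖g n x‖ ≤ ‖x‖ := fun x n => by
    calc ‖g n x‖ ≤ ‖g n‖ * ‖x‖ := (g n).le_opNorm x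
      _ ≤ 1 * ‖x‖ := by gcongr; exact hg1 n
      _ = ‖x‖ := one_mul _
  have hmem : ∀ x : Q, Memℓp (fun n => g n x) ∞ := fun x =>
    memℓp_infty ⟨‖x‖, by rintro r ⟨n, rfl⟩; exact hbd x n⟩
  refine ⟨⟨{ toFun := fun x => ⟨fun n => g n x, hmem x⟩
             map_add' := fun x y => by ext n; simp [lp.coeFn_add]; rfl
             map_smul' := fun c x => by ext n; simp [lp.coeFn_smul] }, fun x => ?_⟩⟩
  change ‖(⟨fun n => g n x, hmem x⟩ : lp (fun _ : ℕ => ℝ) ∞)‖ = ‖x‖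
  apply le_antisymm
  · rw [lp.norm_eq_ciSup]
    exact ciSup_le fun n => hbd x n
  · rw [lp.norm_eq_ciSup]
    refine le_of_forall_pos_le_add fun δ hδ => ?_
    obtain ⟨n, hn⟩ := hd.exists_dist_lt x (half_pos hδ)
    have h1 : ‖d n‖ = g n (d n) := (hg2 n).symm
    have h2 : ‖x‖ ≤ ‖d n‖ + δ / 2 := by
      have := norm_le_norm_add_norm_sub' x (d n)
      rw [dist_comm, dist_eq_norm] at hn
      rw [norm_sub_rev] at hn
      nlinarith [this, hn]
    have h3 : g n (d n) ≤ g n x + δ / 2 := by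
      have h4 : ‖g n (d n) - g n x‖ ≤ ‖d n - x‖ := by
        rw [← map_sub]
        calc ‖g n (d n - x)‖ ≤ ‖g n‖ * ‖d n - x‖ := (g n).le_opNorm _
          _ ≤ 1 * ‖d n - x‖ := by gcongr; exact hg1 n
          _ = _ := one_mul _
      have h5 : ‖d n - x‖ < δ / 2 := by rwa [dist_comm, dist_eq_norm] at hn
      have := le_trans (le_abs_self _) (h4.trans h5.le)
      linarith
    have h6 : g n x ≤ ⨆ m, ‖g m x‖ := by
      have h7 : ‖g n x‖ ≤ ⨆ m, ‖g m x‖ := by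
        refine le_ciSup (f := fun m => ‖g m x‖) ⟨‖x‖, ?_⟩ n
        rintro r ⟨m, rfl⟩; exact hbd x m
      rw [Real.norm_eq_abs] at h7
      exact le_trans (le_abs_self _) h7
    linarith

/-- uniform smallness on a finite-dimensional subspace, by compactness of its unit ball. -/
theorem aux_compact_bound {Q V : Type*} [NormedAddCommGroup Q] [NormedSpace ℝ Q]
    [NormedAddCommGroup V] [NormedSpace ℝ V] (L : Q →ₗ[ℝ] V)
    (Ek : Submodule ℝ Q) [FiniteDimensional ℝ Ek] (φ : ℕ → Q → ℝ)
    (hφL : ∀ j x y, φ j x ≤ φ j y + ‖L (x - y)‖)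
    (hφsmul : ∀ j (a : ℝ) (x : Q), φ j (a • x) = |a| * φ j x)
    (hkey : ∀ x : Q, ∀ δ > (0:ℝ), ∀ᶠ j in atTop, φ j x ≤ ‖x‖ + δ)
    {ε' : ℝ} (hε' : 0 < ε') :
    ∃ N : ℕ, ∀ j ≥ N, ∀ x ∈ Ek, φ j x ≤ (1 + ε') * ‖x‖ := by
  set Lc := LinearMap.toContinuousLinearMap (L ∘ₗ Ek.subtype) with hLc
  set C := ‖Lc‖ with hC
  have hC0 : 0 ≤ C := hC ▸ ContinuousLinearMap.opNorm_nonneg _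
  set η := (ε' / 2) / (C + 1) with hη
  have hη0 : 0 < η := by positivity
  set K : Set Q := Subtype.val '' (Metric.closedBall (0 : ↥Ek) 1) with hK
  have hKcomp : IsCompact K := (isCompact_closedBall _ _).image continuous_subtype_val
  have hKE : ∀ x ∈ K, x ∈ Ek ∧ ‖x‖ ≤ 1 := by
    rintro x ⟨xh, hxh, rfl⟩
    refine ⟨xh.2, ?_⟩
    simpa [Metric.mem_closedBall, dist_zero_right] using hxh
  have hcover : K ⊆ ⋃ x ∈ K, Metric.ball x η := fun x hx =>
    Set.mem_iUnion₂.mpr ⟨x, hx, Metric.mem_ball_self hη0⟩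
  obtain ⟨t, htK, htfin, htcover⟩ :=
    hKcomp.elim_finite_subcover_image (fun x _ => Metric.isOpen_ball) hcover
  have hev : ∀ᶠ j in atTop, ∀ c ∈ t, φ j c ≤ 1 + ε' / 2 := by
    rw [eventually_all_finite htfin]
    intro c hc
    filter_upwards [hkey c (ε' / 2) (by positivity)] with j hj
    have := (hKE c (htK hc)).2
    linarith
  obtain ⟨N, hN⟩ := eventually_atTop.mp hev
  refine ⟨N, fun j hj x hx => ?_⟩
  rcases eq_or_ne x 0 with rfl | hx0
  · have h0 : φ j (0 : Q) = 0 := by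
      have := hφsmul j 0 0
      simpa using this
    simp [h0]
  · have hxn : ‖x‖ ≠ 0 := norm_ne_zero_iff.mpr hx0
    set u := ‖x‖⁻¹ • x with hu
    have huE : u ∈ Ek := Ek.smul_mem _ hx
    have hu1 : ‖u‖ = 1 := by
      rw [hu, norm_smul, norm_inv, norm_norm, inv_mul_cancel₀ hxn]
    have huK : u ∈ K := ⟨⟨u, huE⟩, by
      simpa [Metric.mem_closedBall, dist_zero_right] using hu1.le, rfl⟩
    obtain ⟨c, hct, hub⟩ := Set.mem_iUnion₂.mp (htcover huK)
    have hcK := htK hct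
    have hcE := (hKE c hcK).1
    have hLuc : ‖L (u - c)‖ ≤ ε' / 2 := by
      have h1 : L (u - c) = Lc (⟨u, huE⟩ - ⟨c, hcE⟩) := by
        simp [hLc, LinearMap.coe_toContinuousLinearMap']
      have h2 : ‖(⟨u, huE⟩ - ⟨c, hcE⟩ : ↥Ek)‖ = ‖u - c‖ := rfl
      have h3 : ‖u - c‖ < η := by
        rw [← dist_eq_norm]; exact Metric.mem_ball.mp hub
      calc ‖L (u - c)‖ = ‖Lc (⟨u, huE⟩ - ⟨c, hcE⟩)‖ := by rw [h1]
        _ ≤ C * ‖(⟨u, huE⟩ - ⟨c, hcE⟩ : ↥Ek)‖ := Lc.le_opNorm _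
        _ ≤ C * η := by rw [h2]; exact mul_le_mul_of_nonneg_left h3.le hC0
        _ ≤ ε' / 2 := by
            have hC1 : (0:ℝ) < C + 1 := by linarith
            have h5 : C / (C + 1) ≤ 1 := (div_le_one hC1).mpr (by linarith)
            have h4 : C * (ε' / 2 / (C + 1)) = C / (C + 1) * (ε' / 2) := by ring
            rw [hη, h4]
            nlinarith
    have hφu : φ j u ≤ 1 + ε' := by
      have := hφL j u c
      have h2 := hN j hj c hct
      linarith
    have hxu : x = ‖x‖ • u := by
      rw [hu, smul_smul, mul_inv_cancel₀ hxn, one_smul]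
    calc φ j x = φ j (‖x‖ • u) := by rw [← hxu]
      _ = |‖x‖| * φ j u := hφsmul j _ u
      _ = ‖x‖ * φ j u := by rw [abs_of_nonneg (norm_nonneg x)]
      _ ≤ ‖x‖ * (1 + ε') := mul_le_mul_of_nonneg_left hφu (norm_nonneg x)
      _ = (1 + ε') * ‖x‖ := mul_comm _ _

end Aux

/-- Extension of a finite-dimensional-domain operator through an `ℓ^∞`-embedding,
using 1-injectivity of the target. -/
theorem aux_constr {Q V : Type*} [NormedAddCommGroup Q] [NormedSpace ℝ Q]
    [NormedAddCommGroup V] [NormedSpace ℝ V] (hV : IsOneInjective V)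
    (ι : Q →ₗᵢ[ℝ] lp (fun _ : ℕ => ℝ) ∞) (Ek : Submodule ℝ Q) [FiniteDimensional ℝ Ek]
    (F : Q →ₗ[ℝ] V) {c : ℝ} (hc : 0 ≤ c) (hF : ∀ x ∈ Ek, ‖F x‖ ≤ c * ‖x‖) :
    ∃ T' : lp (fun _ : ℕ => ℝ) ∞ →L[ℝ] V, ‖T'‖ ≤ c ∧ ∀ x ∈ Ek, T' (ι x) = F x := by
  set A : Submodule ℝ (lp (fun _ : ℕ => ℝ) ∞) := Ek.map ι.toLinearMap with hA
  haveI : FiniteDimensional ℝ A := Module.Finite.map Ek ι.toLinearMap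
  have hAcl : IsClosed (A : Set (lp (fun _ : ℕ => ℝ) ∞)) := A.closed_of_finiteDimensional
  set eqv : ↥Ek ≃ₗ[ℝ] ↥A :=
    Submodule.equivMapOfInjective ι.toLinearMap ι.injective Ek with heqv
  set Tlin : ↥A →ₗ[ℝ] V :=
    (F.comp Ek.subtype).comp (eqv.symm : ↥A ≃ₗ[ℝ] ↥Ek).toLinearMap with hT
  set Tc : ↥A →L[ℝ] V := LinearMap.toContinuousLinearMap Tlin with hTcdef
  have hTca : ∀ a : ↥A, Tc a = F ↑(eqv.symm a) := fun a => by
    rw [hTcdef]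
    rw [show ⇑(LinearMap.toContinuousLinearMap Tlin) = ⇑Tlin from
      LinearMap.coe_toContinuousLinearMap' Tlin]
    rfl
  have hanorm : ∀ a : ↥A, ‖(↑(eqv.symm a) : Q)‖ = ‖a‖ := by
    intro a
    have h1 : ((eqv (eqv.symm a) : ↥A) : lp (fun _ : ℕ => ℝ) ∞) = ι ↑(eqv.symm a) :=
      Submodule.coe_equivMapOfInjective_apply ι.toLinearMap ι.injective Ek _
    rw [LinearEquiv.apply_symm_apply] at h1
    rw [Submodule.coe_norm a, h1, ι.norm_map]
  have hTcb : ‖Tc‖ ≤ c := by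
    refine Tc.opNorm_le_bound hc fun a => ?_
    rw [hTca a]
    calc ‖F ↑(eqv.symm a)‖ ≤ c * ‖(↑(eqv.symm a) : Q)‖ := hF _ (eqv.symm a).2
      _ = c * ‖a‖ := by rw [hanorm a]
  obtain ⟨T', hag, hnm⟩ := hV (lp (fun _ : ℕ => ℝ) ∞) A hAcl Tc
  refine ⟨T', hnm ▸ hTcb, fun x hx => ?_⟩
  have h2 : ι x = ↑(eqv ⟨x, hx⟩) := by
    have h3 := Submodule.coe_equivMapOfInjective_apply ι.toLinearMap ι.injective Ek ⟨x, hx⟩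
    rw [heqv]
    exact h3.symm
  rw [h2, hag (eqv ⟨x, hx⟩), hTca, LinearEquiv.symm_apply_apply]

theorem stmt7 (Z : ℕ → Type*) [∀ j, NormedAddCommGroup (Z j)] [∀ j, NormedSpace ℝ (Z j)]
    [∀ j, CompleteSpace (Z j)] (hinj : ∀ j, IsOneInjective (Z j))
    (Y : Submodule ℝ (lp Z ∞)) (hYclosed : IsClosed (Y : Set (lp Z ∞)))
    (hXY : c0Submodule Z ≤ Y)
    [TopologicalSpace.SeparableSpace (↥Y ⧸ (c0Submodule Z).comap Y.subtype)] :
    ∀ ε > (0 : ℝ), ∃ P : ↥Y →L[ℝ] ↥Y,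
      (∀ y : ↥Y, (↑(P y) : lp Z ∞) ∈ c0Submodule Z) ∧
      (∀ y : ↥Y, (↑y : lp Z ∞) ∈ c0Submodule Z → P y = y) ∧
      ‖ContinuousLinearMap.id ℝ ↥Y - P‖ < 1 + ε := by
  classical
  intro ε hε
  set ε' := ε / 2 with hε'def
  have hε'pos : 0 < ε' := by positivity
  -- The subspace `X' = c₀ ∩ Y` of `Y` is closed, so the quotient is a normed space.
  haveI hXcl : IsClosed (((c0Submodule Z).comap Y.subtype : Submodule ℝ ↥Y) : Set ↥Y) := by
    have : (((c0Submodule Z).comap Y.subtype : Submodule ℝ ↥Y) : Set ↥Y)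
        = (Subtype.val : ↥Y → lp Z ∞) ⁻¹'
          {f : lp Z ∞ | Tendsto (fun j => ‖(f : ∀ j, Z j) j‖) atTop (𝓝 0)} := rfl
    rw [this]
    exact (aux_c0_isClosed Z).preimage continuous_subtype_val
  haveI : Nonempty (↥Y ⧸ (c0Submodule Z).comap Y.subtype) := ⟨0⟩
  letI instQ : @NormedSpace ℝ (↥Y ⧸ (c0Submodule Z).comap Y.subtype) _
      NormedAddCommGroup.toSeminormedAddCommGroup := inferInstance
  -- the isometric embedding of the separable quotient into `ℓ^∞(ℕ)`
  obtain ⟨ι⟩ := aux_exists_embed (↥Y ⧸ (c0Submodule Z).comap Y.subtype)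
  -- a linear (not necessarily continuous) section of the quotient map
  obtain ⟨L, hL⟩ := ((c0Submodule Z).comap Y.subtype).mkQ.exists_rightInverse_of_surjective
      (Submodule.range_mkQ _)
  have hLsec : ∀ x : ↥Y ⧸ (c0Submodule Z).comap Y.subtype,
      Submodule.Quotient.mk (L x) = x := by
    intro x
    have := LinearMap.ext_iff.mp hL x
    simpa [Submodule.mkQ_apply] using this
  -- dense sequence in the quotient
  obtain ⟨d, hd⟩ := TopologicalSpace.exists_dense_seq (↥Y ⧸ (c0Submodule Z).comap Y.subtype)
  -- finite-dimensional approximating subspaces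
  set E : ℕ → Submodule ℝ (↥Y ⧸ (c0Submodule Z).comap Y.subtype) :=
    fun k => Submodule.span ℝ (d '' Set.Iio k) with hE
  have hEfd : ∀ k, FiniteDimensional ℝ (E k) := fun k =>
    FiniteDimensional.span_of_finite ℝ ((Set.finite_Iio k).image d)
  have hEmono : ∀ {k k'}, k ≤ k' → E k ≤ E k' := fun {k k'} h =>
    Submodule.span_mono (Set.image_mono (f := d) (Set.Iio_subset_Iio h))
  have hdE : ∀ n, d n ∈ E (n + 1) := fun n =>
    Submodule.subset_span ⟨n, Nat.lt_succ_self n, rfl⟩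
  -- the coordinate maps composed with the lift
  set F : ∀ j, (↥Y ⧸ (c0Submodule Z).comap Y.subtype) →ₗ[ℝ] Z j :=
    fun j => { toFun := fun x => (↑(L x) : lp Z ∞) j
               map_add' := fun x y => by simp [lp.coeFn_add]
               map_smul' := fun c x => by simp [lp.coeFn_smul] } with hF
  -- the key coordinate estimate coming from `X = c₀`
  have hkey : ∀ (y : ↥Y) (δ : ℝ), 0 < δ → ∀ᶠ j in atTop,
      ‖(↑y : lp Z ∞) j‖ ≤ ‖(Submodule.Quotient.mk y : ↥Y ⧸ (c0Submodule Z).comap Y.subtype)‖ + δ := by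
    intro y δ hδ
    obtain ⟨m, hm, hmn⟩ := Submodule.Quotient.norm_mk_lt
      (Submodule.Quotient.mk y : ↥Y ⧸ (c0Submodule Z).comap Y.subtype) (half_pos hδ)
    have hsub : m - y ∈ (c0Submodule Z).comap Y.subtype := (Submodule.Quotient.eq _).mp hm
    have hc0 : Tendsto (fun j => ‖((↑(m - y) : lp Z ∞) : ∀ j, Z j) j‖) atTop (𝓝 0) :=
      Submodule.mem_comap.mp hsub
    obtain ⟨Nn, hNn⟩ := Metric.tendsto_atTop.mp hc0 (δ / 2) (half_pos hδ)
    rw [eventually_atTop]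
    refine ⟨Nn, fun j hj => ?_⟩
    have h1 : ((↑(m - y) : lp Z ∞) : ∀ j, Z j) j
        = ((↑m : lp Z ∞) : ∀ j, Z j) j - ((↑y : lp Z ∞) : ∀ j, Z j) j := by
      have : (↑(m - y) : lp Z ∞) = (↑m : lp Z ∞) - (↑y : lp Z ∞) := rfl
      rw [this, lp.coeFn_sub, Pi.sub_apply]
    have h2 : ((↑y : lp Z ∞) : ∀ j, Z j) j
        = ((↑m : lp Z ∞) : ∀ j, Z j) j - ((↑(m - y) : lp Z ∞) : ∀ j, Z j) j := by
      rw [h1]; abel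
    have h3 : ‖((↑m : lp Z ∞) : ∀ j, Z j) j‖ ≤ ‖m‖ := by
      simpa using lp.norm_apply_le_norm ENNReal.top_ne_zero (↑m : lp Z ∞) j
    have h4 := hNn j hj
    rw [Real.dist_eq, sub_zero, abs_of_nonneg (norm_nonneg _)] at h4
    calc ‖(↑y : lp Z ∞) j‖
        ≤ ‖((↑m : lp Z ∞) : ∀ j, Z j) j‖ + ‖((↑(m - y) : lp Z ∞) : ∀ j, Z j) j‖ := by
          rw [h2]; exact norm_sub_le _ _
      _ ≤ ‖m‖ + δ / 2 := add_le_add h3 h4.le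
      _ ≤ (‖(Submodule.Quotient.mk y : ↥Y ⧸ (c0Submodule Z).comap Y.subtype)‖ + δ / 2) + δ / 2 :=
          add_le_add hmn.le le_rfl
      _ = _ := by ring
  -- uniform estimates on each finite-dimensional piece
  have hNk : ∀ k, ∃ N : ℕ, ∀ j ≥ N, ∀ x ∈ E k,
      ‖F j x‖ ≤ (1 + ε') * ‖x‖ := by
    intro k
    haveI := hEfd k
    refine @aux_compact_bound _ _ _ instQ _ _ L (E k) _ (fun j x => ‖F j x‖) ?_ ?_ ?_ _ hε'pos
    · intro j x y
      have h1 : F j x = F j y + F j (x - y) := by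
        rw [← map_add]; congr 1; abel
      have h2 : ‖F j (x - y)‖ ≤ ‖L (x - y)‖ := by
        have : ‖((↑(L (x - y)) : lp Z ∞) : ∀ j, Z j) j‖ ≤ ‖(↑(L (x - y)) : lp Z ∞)‖ :=
          lp.norm_apply_le_norm ENNReal.top_ne_zero _ j
        simpa [hF, Submodule.coe_norm] using this
      calc ‖F j x‖ ≤ ‖F j y‖ + ‖F j (x - y)‖ := by rw [h1]; exact norm_add_le _ _
        _ ≤ ‖F j y‖ + ‖L (x - y)‖ := add_le_add le_rfl h2
    · intro j a x
      show ‖F j (a • x)‖ = |a| * ‖F j x‖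
      rw [map_smul, norm_smul, Real.norm_eq_abs]
    · intro x δ hδ
      filter_upwards [hkey (L x) δ hδ] with j hj
      have : (Submodule.Quotient.mk (L x) : ↥Y ⧸ (c0Submodule Z).comap Y.subtype) = x := hLsec x
      rw [this] at hj
      exact hj
  choose N hN using hNk
  -- block structure
  set M : ℕ → ℕ := fun k => k + (Finset.range (k + 1)).sum N with hM
  have hMmono : Monotone M := by
    intro a b hab
    refine add_le_add hab (Finset.sum_le_sum_of_subset ?_)
    exact Finset.range_subset_range.mpr (by omega)
  have hMN : ∀ k, N k ≤ M k := fun k =>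
    le_add_of_nonneg_of_le (Nat.zero_le k) (Finset.single_le_sum (fun i _ => Nat.zero_le (N i))
      (Finset.mem_range.mpr (Nat.lt_succ_self k)))
  have hMk : ∀ k, k ≤ M k := fun k => Nat.le_add_right k _
  set kidx : ℕ → ℕ := fun j => Nat.findGreatest (fun k => M k ≤ j) j with hkidx
  have hkidx1 : ∀ {k j}, M k ≤ j → k ≤ kidx j := by
    intro k j h
    have := Nat.le_findGreatest (P := fun k => M k ≤ j) (le_trans (hMk k) h) h
    simpa [hkidx] using this
  have hkidx2 : ∀ {k j}, M k ≤ j → M (kidx j) ≤ j := by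
    intro k j h
    have := Nat.findGreatest_spec (P := fun k => M k ≤ j) (m := k) (le_trans (hMk k) h) h
    simpa [hkidx] using this
  -- construction of the almost-norm-one operators vanishing on `X`
  have hconstr : ∀ (j k : ℕ), N k ≤ j → ∃ ψj : ↥Y →L[ℝ] Z j,
      (∀ y : ↥Y, ‖ψj y‖ ≤ (1 + ε') *
        ‖(Submodule.Quotient.mk y : ↥Y ⧸ (c0Submodule Z).comap Y.subtype)‖) ∧
      (∀ y : ↥Y, (Submodule.Quotient.mk y : ↥Y ⧸ (c0Submodule Z).comap Y.subtype) ∈ E k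
        → ψj y = F j (Submodule.Quotient.mk y)) := by
    intro j k hjk
    haveI := hEfd k
    obtain ⟨T', hT'b, hT'ag⟩ := aux_constr (hinj j) ι (E k) (F j)
      (by linarith : (0:ℝ) ≤ 1 + ε') (fun x hx => hN k j hjk x hx)
    set mkQc : ↥Y →L[ℝ] (↥Y ⧸ (c0Submodule Z).comap Y.subtype) :=
      LinearMap.mkContinuous ((c0Submodule Z).comap Y.subtype).mkQ 1 (fun y => by
        rw [one_mul]; exact Submodule.Quotient.norm_mk_le _ y) with hmkQc
    have hmkQca : ∀ y : ↥Y, mkQc y =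
        (Submodule.Quotient.mk y : ↥Y ⧸ (c0Submodule Z).comap Y.subtype) := fun y => rfl
    refine ⟨T'.comp (ι.toContinuousLinearMap.comp mkQc), fun y => ?_, fun y hy => ?_⟩
    · have h1 : (T'.comp (ι.toContinuousLinearMap.comp mkQc)) y
          = T' (ι (Submodule.Quotient.mk y)) := by
        simp [ContinuousLinearMap.comp_apply, hmkQca,
          LinearIsometry.coe_toContinuousLinearMap]
      rw [h1]
      calc ‖T' (ι (Submodule.Quotient.mk y))‖
          ≤ ‖T'‖ * ‖ι (Submodule.Quotient.mk y)‖ := T'.le_opNorm _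
        _ ≤ (1 + ε') * ‖ι (Submodule.Quotient.mk y)‖ :=
            mul_le_mul_of_nonneg_right hT'b (norm_nonneg _)
        _ = (1 + ε') * ‖(Submodule.Quotient.mk y :
              ↥Y ⧸ (c0Submodule Z).comap Y.subtype)‖ := by rw [ι.norm_map]
    · have h1 : (T'.comp (ι.toContinuousLinearMap.comp mkQc)) y
          = T' (ι (Submodule.Quotient.mk y)) := by
        simp [ContinuousLinearMap.comp_apply, hmkQca,
          LinearIsometry.coe_toContinuousLinearMap]
      rw [h1, hT'ag _ hy]
  have hψex : ∀ j : ℕ, ∃ ψj : ↥Y →L[ℝ] Z j,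
      (∀ y : ↥Y, ‖ψj y‖ ≤ (1 + ε') *
        ‖(Submodule.Quotient.mk y : ↥Y ⧸ (c0Submodule Z).comap Y.subtype)‖) ∧
      (M (kidx j) ≤ j → ∀ y : ↥Y,
        (Submodule.Quotient.mk y : ↥Y ⧸ (c0Submodule Z).comap Y.subtype) ∈ E (kidx j)
        → ψj y = F j (Submodule.Quotient.mk y)) := by
    intro j
    by_cases h : M (kidx j) ≤ j
    · obtain ⟨ψj, h1, h2⟩ := hconstr j (kidx j) (le_trans (hMN _) h)
      exact ⟨ψj, h1, fun _ => h2⟩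
    · exact ⟨0, fun y => by
        rw [ContinuousLinearMap.zero_apply, norm_zero]
        exact mul_nonneg (by linarith) (norm_nonneg _), fun hm => absurd hm h⟩
  choose ψ hψ1 hψ2 using hψex
  -- the main convergence lemma
  have hmain : ∀ y : ↥Y, Tendsto (fun j => ‖(↑y : lp Z ∞) j - ψ j y‖) atTop (𝓝 0) := by
    intro y
    rw [Metric.tendsto_atTop]
    intro δ hδ
    set δ₃ := δ / (4 + ε') with hδ₃
    have hδ₃pos : 0 < δ₃ := by rw [hδ₃]; positivity
    obtain ⟨n, hn⟩ := hd.exists_dist_lt (Submodule.Quotient.mk y) hδ₃pos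
    set v := L (d n) with hv
    have hmkv : (Submodule.Quotient.mk v : ↥Y ⧸ (c0Submodule Z).comap Y.subtype) = d n :=
      hLsec (d n)
    have hqyv : ‖(Submodule.Quotient.mk (y - v) : ↥Y ⧸ (c0Submodule Z).comap Y.subtype)‖
        < δ₃ := by
      have h1 : (Submodule.Quotient.mk (y - v) : ↥Y ⧸ (c0Submodule Z).comap Y.subtype)
          = Submodule.Quotient.mk y - Submodule.Quotient.mk v := rfl
      rw [h1, hmkv]
      rw [dist_eq_norm] at hn
      exact hn
    obtain ⟨N1, hN1⟩ := eventually_atTop.mp (hkey (y - v) δ₃ hδ₃pos)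
    refine ⟨max N1 (M (n + 1)), fun j hj => ?_⟩
    have hj1 : N1 ≤ j := le_trans (le_max_left _ _) hj
    have hj2 : M (n + 1) ≤ j := le_trans (le_max_right _ _) hj
    have hkj : n + 1 ≤ kidx j := hkidx1 hj2
    have hMj : M (kidx j) ≤ j := hkidx2 hj2
    have hvE : (Submodule.Quotient.mk v : ↥Y ⧸ (c0Submodule Z).comap Y.subtype)
        ∈ E (kidx j) := by
      rw [hmkv]; exact hEmono hkj (hdE n)
    have hψv : ψ j v = F j (Submodule.Quotient.mk v) := hψ2 j hMj v hvE
    have hFv : F j (Submodule.Quotient.mk v) = ((↑v : lp Z ∞) : ∀ j, Z j) j := by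
      rw [hmkv]; rfl
    have hmid : ((↑v : lp Z ∞) : ∀ j, Z j) j - ψ j v = 0 := by
      rw [hψv, hFv, sub_self]
    have hsplit : (↑y : lp Z ∞) j - ψ j y
        = ((↑(y - v) : lp Z ∞) : ∀ j, Z j) j
          + (((↑v : lp Z ∞) : ∀ j, Z j) j - ψ j v) + ψ j (v - y) := by
      have hc : (↑(y - v) : lp Z ∞) = (↑y : lp Z ∞) - (↑v : lp Z ∞) := rfl
      have hms : ψ j (v - y) = ψ j v - ψ j y := map_sub _ _ _
      rw [hc, lp.coeFn_sub, Pi.sub_apply, hms]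
      abel
    have h1 : ‖((↑(y - v) : lp Z ∞) : ∀ j, Z j) j‖ ≤ 2 * δ₃ := by
      have := hN1 j hj1
      linarith [hqyv]
    have h3 : ‖ψ j (v - y)‖ ≤ (1 + ε') * δ₃ := by
      have hb := hψ1 j (v - y)
      have hnn : ‖(Submodule.Quotient.mk (v - y) : ↥Y ⧸ (c0Submodule Z).comap Y.subtype)‖
          = ‖(Submodule.Quotient.mk (y - v) : ↥Y ⧸ (c0Submodule Z).comap Y.subtype)‖ := by
        have h4 : (Submodule.Quotient.mk (v - y) : ↥Y ⧸ (c0Submodule Z).comap Y.subtype)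
            = -(Submodule.Quotient.mk (y - v)) := by
          have : v - y = -(y - v) := by abel
          rw [this]; rfl
        rw [h4]; exact norm_neg _
      rw [hnn] at hb
      calc ‖ψ j (v - y)‖ ≤ (1 + ε') *
            ‖(Submodule.Quotient.mk (y - v) : ↥Y ⧸ (c0Submodule Z).comap Y.subtype)‖ := hb
        _ ≤ (1 + ε') * δ₃ := mul_le_mul_of_nonneg_left hqyv.le (by linarith)
    rw [Real.dist_eq, sub_zero, abs_of_nonneg (norm_nonneg _)]
    calc ‖(↑y : lp Z ∞) j - ψ j y‖
        ≤ ‖((↑(y - v) : lp Z ∞) : ∀ j, Z j) j‖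
          + ‖((↑v : lp Z ∞) : ∀ j, Z j) j - ψ j v‖ + ‖ψ j (v - y)‖ := by
          rw [hsplit]
          refine le_trans (norm_add_le _ _) ?_
          exact add_le_add (norm_add_le _ _) le_rfl
      _ ≤ 2 * δ₃ + 0 + (1 + ε') * δ₃ := by
          rw [hmid, norm_zero]
          linarith [h1, h3]
      _ < (4 + ε') * δ₃ := by
          have hdiff : (4 + ε') * δ₃ - (2 * δ₃ + 0 + (1 + ε') * δ₃) = δ₃ := by ring
          linarith [hδ₃pos]
      _ = δ := by
          rw [hδ₃, mul_div_cancel₀]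
          positivity
  -- assembling the projection
  have hbound : ∀ (y : ↥Y) (j : ℕ), ‖(↑y : lp Z ∞) j - ψ j y‖ ≤ (2 + ε') * ‖y‖ := by
    intro y j
    have h1 : ‖((↑y : lp Z ∞) : ∀ j, Z j) j‖ ≤ ‖y‖ := by
      have := lp.norm_apply_le_norm ENNReal.top_ne_zero (↑y : lp Z ∞) j
      rwa [← Submodule.coe_norm] at this
    have h2 : ‖ψ j y‖ ≤ (1 + ε') * ‖y‖ := by
      calc ‖ψ j y‖ ≤ (1 + ε') *
          ‖(Submodule.Quotient.mk y : ↥Y ⧸ (c0Submodule Z).comap Y.subtype)‖ := hψ1 j y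
        _ ≤ (1 + ε') * ‖y‖ := mul_le_mul_of_nonneg_left
            (Submodule.Quotient.norm_mk_le _ y) (by linarith)
    calc ‖(↑y : lp Z ∞) j - ψ j y‖ ≤ ‖((↑y : lp Z ∞) : ∀ j, Z j) j‖ + ‖ψ j y‖ :=
          norm_sub_le _ _
      _ ≤ ‖y‖ + (1 + ε') * ‖y‖ := add_le_add h1 h2
      _ = (2 + ε') * ‖y‖ := by ring
  have hmem : ∀ y : ↥Y, Memℓp (fun j => (↑y : lp Z ∞) j - ψ j y) ∞ := fun y =>
    memℓp_infty ⟨(2 + ε') * ‖y‖, by rintro r ⟨j, rfl⟩; exact hbound y j⟩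
  have hc0mem : ∀ y : ↥Y,
      (⟨fun j => (↑y : lp Z ∞) j - ψ j y, hmem y⟩ : lp Z ∞) ∈ c0Submodule Z := fun y =>
    hmain y
  set Pl : ↥Y →ₗ[ℝ] ↥Y :=
    { toFun := fun y => ⟨(⟨fun j => (↑y : lp Z ∞) j - ψ j y, hmem y⟩ : lp Z ∞),
        hXY (hc0mem y)⟩
      map_add' := fun a b => by
        apply Subtype.ext
        apply lp.ext
        funext j
        show (↑(a + b) : lp Z ∞) j - ψ j (a + b)
          = ((↑a : lp Z ∞) j - ψ j a) + ((↑b : lp Z ∞) j - ψ j b)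
        have hc : (↑(a + b) : lp Z ∞) = (↑a : lp Z ∞) + (↑b : lp Z ∞) := rfl
        rw [hc, lp.coeFn_add, Pi.add_apply, map_add]
        abel
      map_smul' := fun c a => by
        apply Subtype.ext
        apply lp.ext
        funext j
        show (↑(c • a) : lp Z ∞) j - ψ j (c • a) = c • ((↑a : lp Z ∞) j - ψ j a)
        have hc : (↑(c • a) : lp Z ∞) = c • (↑a : lp Z ∞) := rfl
        rw [hc, lp.coeFn_smul, Pi.smul_apply, map_smul, smul_sub] } with hPl
  set P : ↥Y →L[ℝ] ↥Y := Pl.mkContinuous ((2 + ε')) (fun y => by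
    rw [Submodule.coe_norm]
    refine lp.norm_le_of_forall_le (by positivity) fun j => ?_
    exact hbound y j) with hP
  refine ⟨P, fun y => hc0mem y, fun y hy => ?_, ?_⟩
  · have hyX : y ∈ (c0Submodule Z).comap Y.subtype := hy
    have hmk0 : (Submodule.Quotient.mk y : ↥Y ⧸ (c0Submodule Z).comap Y.subtype) = 0 :=
      (Submodule.Quotient.mk_eq_zero _).mpr hyX
    have hψ0 : ∀ j, ψ j y = 0 := fun j => norm_le_zero_iff.mp (by
      have := hψ1 j y
      have hz : ‖(0 : ↥Y ⧸ (c0Submodule Z).comap Y.subtype)‖ = 0 := norm_zero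
      rw [hmk0, hz, mul_zero] at this
      exact this)
    apply Subtype.ext
    apply lp.ext
    funext j
    show (↑y : lp Z ∞) j - ψ j y = (↑y : lp Z ∞) j
    rw [hψ0 j, sub_zero]
  · have hop : ‖ContinuousLinearMap.id ℝ ↥Y - P‖ ≤ 1 + ε' := by
      refine ContinuousLinearMap.opNorm_le_bound _ (by linarith) fun y => ?_
      have h1 : (ContinuousLinearMap.id ℝ ↥Y - P) y = y - P y := rfl
      rw [h1, Submodule.coe_norm]
      refine lp.norm_le_of_forall_le (by positivity) fun j => ?_
      have h2 : ((↑(y - P y) : lp Z ∞) : ∀ j, Z j) j = ψ j y := by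
        have hc : (↑(y - P y) : lp Z ∞) = (↑y : lp Z ∞) - (↑(P y) : lp Z ∞) := rfl
        rw [hc, lp.coeFn_sub, Pi.sub_apply]
        show (↑y : lp Z ∞) j - ((↑y : lp Z ∞) j - ψ j y) = ψ j y
        abel
      rw [h2]
      calc ‖ψ j y‖ ≤ (1 + ε') *
          ‖(Submodule.Quotient.mk y : ↥Y ⧸ (c0Submodule Z).comap Y.subtype)‖ := hψ1 j y
        _ ≤ (1 + ε') * ‖y‖ := mul_le_mul_of_nonneg_left
            (Submodule.Quotient.norm_mk_le _ y) (by linarith)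
    have : (1 : ℝ) + ε' < 1 + ε := by rw [hε'def]; linarith
    linarith
end

section
/- Let Z_1, Z_2, ... be arbitrary Banach spaces, set X = (⊕_j Z_j)_{c_0}. Then for every closed subspace Y with X ⊆ Y ⊆ (⊕_j Z_j)_{ℓ^∞} and Y/X finite-dimensional, and every ε > 0, there is a bounded linear projection P from Y onto X with ‖I − P‖ < 1 + ε. -/
/-!
Let `Q = Y/X`. Zeroing the first `N` coordinates gives contractions `T_N` of `ℓ^∞(Z_j)` with
`x - T_N x ∈ c₀`, so `T_N` maps `Y` into itself, and composing `T_N` with any linear lift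
`Q → Y` gives again a lift `S_N`. For fixed `q`, `‖S_N q‖` decreases to the quotient norm
`‖q‖`, because a near-optimal representative of `q` differs from the lift by an element of
`c₀`, whose tails go to zero. As `Q` is finite-dimensional its unit sphere is compact, so by
Dini's theorem the convergence is uniform there and `‖S_N‖ < 1 + ε` for large `N`. With `π : Y → Q` the quotient
map, `P = I - S_N ∘ π` is a projection onto `X` and `‖I - P‖ ≤ ‖S_N‖ ‖π‖ ≤ ‖S_N‖`.
-/

open Filter Topology ENNReal

theorem exists_projection_of_rightInverse_mkQ {𝕜 E : Type*} [RCLike 𝕜] [NormedAddCommGroup E]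
    [NormedSpace 𝕜 E] {X : Submodule 𝕜 E} (S : (E ⧸ X) →L[𝕜] E)
    (hS : ∀ q, Submodule.Quotient.mk (S q) = q) :
    ∃ P : E →L[𝕜] E, (∀ y, P y ∈ X) ∧ (∀ y ∈ X, P y = y) ∧
      ‖ContinuousLinearMap.id 𝕜 E - P‖ ≤ ‖S‖ := by
  refine ⟨.id 𝕜 E - S ∘L X.mkQL, fun y => ?_, fun y hy => ?_, ?_⟩
  · simp [← Submodule.Quotient.mk_eq_zero, hS]
  · simp [(Submodule.Quotient.mk_eq_zero X).2 hy]
  · rw [_root_.sub_sub_cancel]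
    refine (S.opNorm_comp_le _).trans (mul_le_of_le_one_right (norm_nonneg S) ?_)
    exact X.mkQL.opNorm_le_bound zero_le_one fun y => by
      simpa using Submodule.Quotient.norm_mk_le X y

theorem eventually_opNorm_le_of_antitone_of_tendsto {𝕜 Q E : Type*} [RCLike 𝕜]
    [NormedAddCommGroup Q] [NormedSpace 𝕜 Q] [FiniteDimensional 𝕜 Q]
    [NormedAddCommGroup E] [NormedSpace 𝕜 E] {S : ℕ → Q →L[𝕜] E}
    (hanti : ∀ q, Antitone fun N => ‖S N q‖)
    (hlim : ∀ q, Tendsto (fun N => ‖S N q‖) atTop (𝓝 ‖q‖)) {ε : ℝ} (hε : 0 < ε) :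
    ∀ᶠ N in atTop, ‖S N‖ ≤ 1 + ε := by
  have := FiniteDimensional.proper_rclike 𝕜 Q
  have hunif : TendstoUniformlyOn (fun N q => ‖S N q‖) norm atTop (Metric.sphere 0 1) :=
    Antitone.tendstoUniformlyOn_of_forall_tendsto (isCompact_sphere 0 1)
      (fun N => (S N).continuous.norm.continuousOn) (fun q _ => hanti q)
      continuous_norm.continuousOn fun q _ => hlim q
  filter_upwards [Metric.tendstoUniformlyOn_iff.1 hunif ε hε] with N hN
  refine ContinuousLinearMap.opNorm_le_of_unit_norm (by positivity) fun q hq => ?_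
  have := hN q (mem_sphere_zero_iff_norm.2 hq)
  rw [Real.dist_eq, hq] at this
  linarith [neg_abs_le (1 - ‖S N q‖)]

section Tails

variable {𝕜 E : Type*} [RCLike 𝕜] [NormedAddCommGroup E] [NormedSpace 𝕜 E]
  {X : Submodule 𝕜 E} {T : ℕ → E →L[𝕜] E}

theorem tendsto_norm_apply_mk (hTX : ∀ N x, x - T N x ∈ X)
    (hT : ∀ N x, ‖T N x‖ ≤ ‖x‖) (hT0 : ∀ x ∈ X, Tendsto (fun N => ‖T N x‖) atTop (𝓝 0)) (x : E) :
    Tendsto (fun N => ‖T N x‖) atTop (𝓝 ‖(Submodule.Quotient.mk x : E ⧸ X)‖) := by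
  have hmk (N : ℕ) : (Submodule.Quotient.mk (T N x) : E ⧸ X) = Submodule.Quotient.mk x :=
    ((Submodule.Quotient.eq X).2 (hTX N x)).symm
  refine tendsto_order.2 ⟨fun a ha => .of_forall fun N => ?_, fun a ha => ?_⟩
  · exact ha.trans_le (hmk N ▸ Submodule.Quotient.norm_mk_le X (T N x))
  obtain ⟨m, hm, hmx⟩ := Submodule.Quotient.norm_mk_lt (S := X) (Submodule.Quotient.mk x)
    (sub_pos.2 ha)
  have hxm : x - m ∈ X := (Submodule.Quotient.eq X).1 hm.symm
  filter_upwards [(tendsto_order.1 (hT0 _ hxm)).2 _ (sub_pos.2 hmx)] with N hN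
  calc ‖T N x‖ = ‖T N m + T N (x - m)‖ := by rw [← map_add, add_sub_cancel]
    _ ≤ ‖m‖ + ‖T N (x - m)‖ := norm_add_le_of_le (hT N m) le_rfl
    _ < a := by linarith

theorem exists_projection_norm_id_sub_lt_of_tails [IsClosed (X : Set E)]
    [FiniteDimensional 𝕜 (E ⧸ X)] (hTX : ∀ N x, x - T N x ∈ X) (hT : ∀ N x, ‖T N x‖ ≤ ‖x‖)
    (hanti : ∀ x, Antitone fun N => ‖T N x‖)
    (hT0 : ∀ x ∈ X, Tendsto (fun N => ‖T N x‖) atTop (𝓝 0)) {ε : ℝ} (hε : 0 < ε) :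
    ∃ P : E →L[𝕜] E, (∀ y, P y ∈ X) ∧ (∀ y ∈ X, P y = y) ∧
      ‖ContinuousLinearMap.id 𝕜 E - P‖ < 1 + ε := by
  obtain ⟨L, hL⟩ := X.mkQ.exists_rightInverse_of_surjective X.range_mkQ
  have hLq : ∀ q, Submodule.Quotient.mk (L q) = q := LinearMap.congr_fun hL
  let S N : (E ⧸ X) →L[𝕜] E := T N ∘L LinearMap.toContinuousLinearMap L
  have hSq (N : ℕ) (q : E ⧸ X) : Submodule.Quotient.mk (S N q) = q :=
    ((Submodule.Quotient.eq X).2 (hTX N (L q))).symm.trans (hLq q)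
  have hSlim (q : E ⧸ X) : Tendsto (fun N => ‖S N q‖) atTop (𝓝 ‖q‖) := by
    have := tendsto_norm_apply_mk hTX hT hT0 (L q)
    rwa [hLq] at this
  obtain ⟨N, hN⟩ := (eventually_opNorm_le_of_antitone_of_tendsto (fun q => hanti (L q)) hSlim
    (half_pos hε)).exists
  obtain ⟨P, hPX, hPid, hPnorm⟩ := exists_projection_of_rightInverse_mkQ (S N) (hSq N)
  exact ⟨P, hPX, hPid, by linarith⟩

end Tails

section LpTail

variable {Z : ℕ → Type*} [∀ j, NormedAddCommGroup (Z j)] [∀ j, NormedSpace ℝ (Z j)]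

noncomputable def lpTail (N : ℕ) : lp Z ∞ →L[ℝ] lp Z ∞ :=
  LinearMap.mkContinuous
    { toFun := fun f => ⟨fun j => if N ≤ j then f j else 0,
        (lp.memℓp f).mono' fun j => by split_ifs <;> simp⟩
      map_add' := fun f g => lp.ext <| funext fun j => by
        simp only [lp.coeFn_add, Pi.add_apply]
        split_ifs <;> simp
      map_smul' := fun c f => lp.ext <| funext fun j => by
        simp only [lp.coeFn_smul, Pi.smul_apply]
        split_ifs <;> simp } 1
    fun f => by
      rw [one_mul]
      refine lp.norm_le_of_forall_le (norm_nonneg f) fun j => ?_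
      show ‖(if N ≤ j then f j else 0 : Z j)‖ ≤ ‖f‖
      split_ifs
      · exact lp.norm_apply_le_norm top_ne_zero f j
      · simp

theorem lpTail_apply (N : ℕ) (f : lp Z ∞) (j : ℕ) :
    lpTail N f j = if N ≤ j then f j else 0 := rfl

theorem norm_lpTail_le_of_forall {N : ℕ} {f : lp Z ∞} {C : ℝ} (hC : 0 ≤ C)
    (h : ∀ j, N ≤ j → ‖f j‖ ≤ C) : ‖lpTail N f‖ ≤ C := by
  refine lp.norm_le_of_forall_le hC fun j => ?_
  rw [lpTail_apply]
  split_ifs with hj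
  · exact h j hj
  · simpa using hC

theorem norm_lpTail_le (N : ℕ) (f : lp Z ∞) : ‖lpTail N f‖ ≤ ‖f‖ :=
  norm_lpTail_le_of_forall (norm_nonneg f) fun j _ => lp.norm_apply_le_norm top_ne_zero f j

theorem antitone_norm_lpTail (f : lp Z ∞) : Antitone fun N => ‖lpTail N f‖ := by
  intro N M hNM
  refine norm_lpTail_le_of_forall (norm_nonneg _) fun j hj => ?_
  simpa [lpTail_apply, hNM.trans hj] using lp.norm_apply_le_norm top_ne_zero (lpTail N f) j

theorem sub_lpTail_mem_c0Submodule (N : ℕ) (f : lp Z ∞) : f - lpTail N f ∈ c0Submodule Z :=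
  tendsto_const_nhds.congr' <| eventually_atTop.2 ⟨N, fun j hj => by simp [lpTail_apply, hj]⟩

theorem tendsto_norm_lpTail_of_mem_c0Submodule {f : lp Z ∞} (hf : f ∈ c0Submodule Z) :
    Tendsto (fun N => ‖lpTail N f‖) atTop (𝓝 0) := by
  refine Metric.tendsto_atTop.2 fun ε hε => ?_
  obtain ⟨N, hN⟩ := Metric.tendsto_atTop.1 hf (ε / 2) (half_pos hε)
  refine ⟨N, fun M hM => ?_⟩
  rw [dist_zero_right, norm_norm]
  refine (norm_lpTail_le_of_forall (half_pos hε).le fun j hj => ?_).trans_lt (half_lt_self hε)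
  simpa using (hN j (hM.trans hj)).le

theorem isClosed_c0Submodule : IsClosed (c0Submodule Z : Set (lp Z ∞)) := by
  refine isClosed_of_closure_subset fun f hf => Metric.tendsto_atTop.2 fun ε hε => ?_
  obtain ⟨g, hg, hfg⟩ := Metric.mem_closure_iff.1 hf (ε / 2) (half_pos hε)
  obtain ⟨N, hN⟩ := Metric.tendsto_atTop.1 hg (ε / 2) (half_pos hε)
  refine ⟨N, fun j hj => ?_⟩
  have hgj : ‖g j‖ < ε / 2 := by simpa using hN j hj
  have hfgj : ‖f j - g j‖ < ε / 2 :=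
    (lp.norm_apply_le_norm top_ne_zero (f - g) j).trans_lt (dist_eq_norm f g ▸ hfg)
  rw [dist_zero_right, norm_norm]
  linarith [norm_sub_norm_le (f j) (g j)]

end LpTail

theorem stmt8_general (Z : ℕ → Type*) [∀ j, NormedAddCommGroup (Z j)] [∀ j, NormedSpace ℝ (Z j)]
    (Y : Submodule ℝ (lp Z ∞))
    (hXY : c0Submodule Z ≤ Y)
    (hfin : FiniteDimensional ℝ (↥Y ⧸ (c0Submodule Z).comap Y.subtype)) :
    ∀ ε > (0 : ℝ), ∃ P : ↥Y →L[ℝ] ↥Y,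
      (∀ y : ↥Y, (↑(P y) : lp Z ∞) ∈ c0Submodule Z) ∧
      (∀ y : ↥Y, (↑y : lp Z ∞) ∈ c0Submodule Z → P y = y) ∧
      ‖ContinuousLinearMap.id ℝ ↥Y - P‖ < 1 + ε := by
  intro ε hε
  have : IsClosed ((c0Submodule Z).comap Y.subtype : Set Y) :=
    isClosed_c0Submodule.preimage continuous_subtype_val
  have hYtail (N : ℕ) : ∀ y ∈ Y, lpTail N y ∈ Y := fun y hy => by
    simpa using Y.sub_mem hy (hXY (sub_lpTail_mem_c0Submodule N y))
  let T N : Y →L[ℝ] Y := (lpTail N).restrict (hYtail N)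
  exact exists_projection_norm_id_sub_lt_of_tails
    (X := (c0Submodule Z).comap Y.subtype) (T := T)
    (fun N y => by simpa [T] using sub_lpTail_mem_c0Submodule N (y : lp Z ∞))
    (fun N y => norm_lpTail_le N (y : lp Z ∞)) (fun y => antitone_norm_lpTail (y : lp Z ∞))
    (fun y hy => tendsto_norm_lpTail_of_mem_c0Submodule hy) hε

theorem stmt8 (Z : ℕ → Type*) [∀ j, NormedAddCommGroup (Z j)] [∀ j, NormedSpace ℝ (Z j)]
    [∀ j, CompleteSpace (Z j)]
    (Y : Submodule ℝ (lp Z ∞)) (hYclosed : IsClosed (Y : Set (lp Z ∞)))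
    (hXY : c0Submodule Z ≤ Y)
    (hfin : FiniteDimensional ℝ (↥Y ⧸ (c0Submodule Z).comap Y.subtype)) :
    ∀ ε > (0 : ℝ), ∃ P : ↥Y →L[ℝ] ↥Y,
      (∀ y : ↥Y, (↑(P y) : lp Z ∞) ∈ c0Submodule Z) ∧
      (∀ y : ↥Y, (↑y : lp Z ∞) ∈ c0Submodule Z → P y = y) ∧
      ‖ContinuousLinearMap.id ℝ ↥Y - P‖ < 1 + ε :=
  stmt8_general Z Y hXY hfin
end

section
/- Let Z be a Banach space, X ⊆ Y separable Banach spaces, and T : Y → ℓ^∞(Z) a bounded linear operator with coordinate operators (T_n), i.e., T(y) = (T_n(y))_n. Suppose T(X) ⊆ c_0(Z) and the sequence (T_n) is relatively compact in the strong operator topology on L(Y,Z). Then there exists a bounded linear operator T̃ : Y → c_0(Z) extending T|X with ‖T̃‖ ≤ 2‖T‖. -/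
/-!
Every strong limit `S` of a subsequence of `(Tₙ)` has `‖S‖ ≤ ‖T‖` and vanishes on `X`, because
`T(X) ⊆ c₀(Z)`. Since `Y` is separable, evaluation along a dense sequence turns strong convergence
of bounded operators into convergence in the metrizable space `ℕ → Z`; relative compactness then
yields such limits `Sₙ` with `Tₙ - Sₙ → 0` strongly. The operator `y ↦ (Tₙ y - Sₙ y)ₙ` is
`c₀(Z)`-valued, agrees with `T` on `X`, and has norm at most `2‖T‖`.
-/

open Filter Topology ENNReal

open Metric

theorem exists_mem_tendsto_dist_of_forall_subseq {α : Type*} [PseudoMetricSpace α] {x : ℕ → α}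
    {L : Set α} (h : ∀ φ : ℕ → ℕ, StrictMono φ → ∃ ψ : ℕ → ℕ, StrictMono ψ ∧
      ∃ a ∈ L, Tendsto (x ∘ φ ∘ ψ) atTop (𝓝 a)) :
    ∃ s : ℕ → α, (∀ n, s n ∈ L) ∧ Tendsto (fun n => dist (x n) (s n)) atTop (𝓝 0) := by
  obtain ⟨-, -, a, ha, -⟩ := h id strictMono_id
  have hinfDist : Tendsto (fun n => infDist (x n) L) atTop (𝓝 0) := by
    refine tendsto_of_subseq_tendsto fun ns hns => ?_
    obtain ⟨φ, hφ, hnsφ⟩ := strictMono_subseq_of_tendsto_atTop hns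
    obtain ⟨ψ, -, b, hb, hlim⟩ := h _ hnsφ
    refine ⟨φ ∘ ψ, ?_⟩
    simpa [infDist_zero_of_mem hb, Function.comp_def] using
      ((continuous_infDist_pt L).tendsto b).comp hlim
  have hsel : ∀ n : ℕ, ∃ s ∈ L, dist (x n) s < infDist (x n) L + 1 / (n + 1) := fun n =>
    (infDist_lt_iff ⟨a, ha⟩).1 (lt_add_of_pos_right _ Nat.one_div_pos_of_nat)
  choose s hsL hs using hsel
  refine ⟨s, hsL, squeeze_zero (fun n => dist_nonneg) (fun n => (hs n).le) ?_⟩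
  simpa using hinfDist.add tendsto_one_div_add_atTop_nhds_zero_nat

section Operators

variable {𝕜 : Type*} [NontriviallyNormedField 𝕜] {Y Z : Type*} [NormedAddCommGroup Y]
  [NormedSpace 𝕜 Y] [NormedAddCommGroup Z] [NormedSpace 𝕜 Z] {ι : Type*}

namespace ContinuousLinearMap

theorem opNorm_le_of_tendsto_apply {l : Filter ι} [l.NeBot] {A : ι → Y →L[𝕜] Z}
    {S : Y →L[𝕜] Z} {c : ℝ} (hc : 0 ≤ c) (hA : ∀ i, ‖A i‖ ≤ c)
    (hS : ∀ y, Tendsto (fun i => A i y) l (𝓝 (S y))) : ‖S‖ ≤ c :=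
  opNorm_le_bound _ hc fun y =>
    le_of_tendsto' (hS y).norm fun i => (A i).le_of_opNorm_le (hA i) y

theorem tendsto_apply_zero_of_denseRange {l : Filter ι} {D : ι → Y →L[𝕜] Z} {c : ℝ}
    (hD : ∀ i, ‖D i‖ ≤ c) {α : Type*} {u : α → Y} (hu : DenseRange u)
    (hDu : ∀ a, Tendsto (fun i => D i (u a)) l (𝓝 0)) (y : Y) :
    Tendsto (fun i => D i y) l (𝓝 0) := by
  have hequi : Equicontinuous ((↑) ∘ D : ι → Y → Z) :=
    ((NormedSpace.equicontinuous_TFAE D).out 5 1).1 (⟨c, hD⟩ : ∃ C, ∀ i, ‖D i‖ ≤ C)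
  exact hu.induction_on y (hequi.isClosed_setOfPred_tendsto continuous_const) hDu

noncomputable def toLinfty (D : ι → Y →L[𝕜] Z) {c : ℝ} (hD : ∀ i, ‖D i‖ ≤ c) :
    Y →L[𝕜] lp (fun _ : ι => Z) ∞ :=
  LinearMap.mkContinuousOfExistsBound
    { toFun := fun y => ⟨fun i => D i y, memℓp_infty (f := fun i => D i y) ⟨c * ‖y‖, by
        rintro _ ⟨i, rfl⟩
        exact (D i).le_of_opNorm_le (hD i) y⟩⟩
      map_add' := fun y z => lp.ext <| funext fun i => map_add (D i) y z
      map_smul' := fun a y => lp.ext <| funext fun i => map_smul (D i) a y }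
    ⟨max c 0, fun y => lp.norm_le_of_forall_le (by positivity) fun i =>
      (D i).le_of_opNorm_le ((hD i).trans (le_max_left c 0)) y⟩

@[simp]
theorem toLinfty_apply (D : ι → Y →L[𝕜] Z) {c : ℝ} (hD : ∀ i, ‖D i‖ ≤ c) (y : Y) (i : ι) :
    (toLinfty D hD y : ι → Z) i = D i y :=
  rfl

theorem norm_toLinfty_le (D : ι → Y →L[𝕜] Z) {c : ℝ} (hD : ∀ i, ‖D i‖ ≤ c) (hc : 0 ≤ c) :
    ‖toLinfty D hD‖ ≤ c :=
  opNorm_le_bound _ hc fun y => lp.norm_le_of_forall_le (by positivity) fun i =>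
    (D i).le_of_opNorm_le (hD i) y

end ContinuousLinearMap

open scoped PiCountable Uniformity in
theorem exists_tendsto_sub_apply_of_forall_subseq [TopologicalSpace.SeparableSpace Y]
    {A : ℕ → Y →L[𝕜] Z} {C : Set (Y →L[𝕜] Z)} {c : ℝ} (hA : ∀ n, ‖A n‖ ≤ c) (hC : ∀ S ∈ C, ‖S‖ ≤ c)
    (h : ∀ φ : ℕ → ℕ, StrictMono φ → ∃ ψ : ℕ → ℕ, StrictMono ψ ∧
      ∃ S ∈ C, ∀ y, Tendsto (fun k => A (φ (ψ k)) y) atTop (𝓝 (S y))) :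
    ∃ S : ℕ → Y →L[𝕜] Z, (∀ n, S n ∈ C) ∧ ∀ y, Tendsto (fun n => (A n - S n) y) atTop (𝓝 0) := by
  obtain ⟨u, hu⟩ := TopologicalSpace.exists_dense_seq Y
  set ev : (Y →L[𝕜] Z) → ℕ → Z := fun S k => S (u k)
  -- `ℕ → Z` carries the scoped `PiCountable` metric, whose uniformity is the product one.
  obtain ⟨s, hsC, hs⟩ := exists_mem_tendsto_dist_of_forall_subseq (x := fun n => ev (A n))
    (L := ev '' C) fun φ hφ => by
      obtain ⟨ψ, hψ, S, hSC, hlim⟩ := h φ hφ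
      exact ⟨ψ, hψ, ev S, ⟨S, hSC, rfl⟩, tendsto_pi_nhds.2 fun k => hlim (u k)⟩
  choose S hSC hSs using hsC
  refine ⟨S, hSC, ContinuousLinearMap.tendsto_apply_zero_of_denseRange
    (c := c + c) (fun n => (norm_sub_le _ _).trans (add_le_add (hA n) (hC _ (hSC n)))) hu
    fun k => ?_⟩
  have hpair : Tendsto (fun n => (ev (A n), ev (S n))) atTop (𝓤 (ℕ → Z)) :=
    tendsto_uniformity_iff_dist_tendsto_zero.2 (by simpa only [← hSs] using hs)
  simpa [tendsto_zero_iff_norm_tendsto_zero, dist_eq_norm, ev] using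
    tendsto_uniformity_iff_dist_tendsto_zero.1
      (Tendsto.comp (Pi.uniformContinuous_proj (fun _ : ℕ => Z) k) hpair)

end Operators

theorem stmt9_general {Z : Type*} [NormedAddCommGroup Z] [NormedSpace ℝ Z]
    {Y : Type*} [NormedAddCommGroup Y] [NormedSpace ℝ Y]
    [TopologicalSpace.SeparableSpace Y]
    (X : Subspace ℝ Y)
    (T : Y →L[ℝ] lp (fun _ : ℕ => Z) ∞)
    (Tn : ℕ → (Y →L[ℝ] Z)) (hTn : ∀ n y, Tn n y = (T y : ∀ _ : ℕ, Z) n)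
    -- (i) T(X) ⊆ c₀(Z):
    (hTX : ∀ x ∈ X, T x ∈ c0Submodule (fun _ : ℕ => Z))
    -- (ii) (Tₙ) is relatively compact in the strong operator topology:
    (hcpt : ∀ φ : ℕ → ℕ, StrictMono φ → ∃ ψ : ℕ → ℕ, StrictMono ψ ∧
      ∃ S : Y →L[ℝ] Z, ∀ y : Y,
        Tendsto (fun k => ‖Tn (φ (ψ k)) y - S y‖) atTop (𝓝 0)) :
    ∃ T' : Y →L[ℝ] ↥(c0Submodule (fun _ : ℕ => Z)),
      (∀ x ∈ X, (T' x : lp (fun _ : ℕ => Z) ∞) = T x) ∧ ‖T'‖ ≤ 2 * ‖T‖ := by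
  have hTn_le : ∀ n, ‖Tn n‖ ≤ ‖T‖ := fun n =>
    ContinuousLinearMap.opNorm_le_bound _ (norm_nonneg T) fun y => by
      rw [hTn]
      exact (lp.norm_apply_le_norm ENNReal.top_ne_zero (T y) n).trans (T.le_opNorm y)
  -- Every strong limit of a subsequence of `(Tn)` lies in this set.
  let C : Set (Y →L[ℝ] Z) := {S | ‖S‖ ≤ ‖T‖ ∧ ∀ x ∈ X, S x = 0}
  obtain ⟨S, hSC, hlim⟩ :=
    exists_tendsto_sub_apply_of_forall_subseq (C := C) hTn_le (fun S hS => hS.1) fun φ hφ => by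
      obtain ⟨ψ, hψ, S, hS⟩ := hcpt φ hφ
      have hS' y : Tendsto (fun k => Tn (φ (ψ k)) y) atTop (𝓝 (S y)) :=
        tendsto_iff_norm_sub_tendsto_zero.2 (hS y)
      have hSX : ∀ x ∈ X, S x = 0 := fun x hx => tendsto_nhds_unique (hS' x) <| by
        simpa [tendsto_zero_iff_norm_tendsto_zero, hTn] using
          (hTX x hx).comp (hφ.comp hψ).tendsto_atTop
      exact ⟨ψ, hψ, S,
        ⟨S.opNorm_le_of_tendsto_apply (norm_nonneg T) (fun _ => hTn_le _) hS', hSX⟩, hS'⟩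
  have hD : ∀ n, ‖Tn n - S n‖ ≤ 2 * ‖T‖ := fun n =>
    (norm_sub_le _ _).trans (by linarith [hTn_le n, (hSC n).1])
  refine ⟨(ContinuousLinearMap.toLinfty _ hD).codRestrict _ fun y => ?_, fun x hx => ?_, ?_⟩
  · simpa [c0Submodule, tendsto_zero_iff_norm_tendsto_zero] using hlim y
  · ext n
    simp [(hSC n).2 x hx, hTn]
  · exact ContinuousLinearMap.opNorm_le_bound _ (by positivity) fun y =>
      (ContinuousLinearMap.toLinfty _ hD).le_of_opNorm_le
        (ContinuousLinearMap.norm_toLinfty_le _ hD (by positivity)) y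

theorem stmt9 {Z : Type*} [NormedAddCommGroup Z] [NormedSpace ℝ Z] [CompleteSpace Z]
    {Y : Type*} [NormedAddCommGroup Y] [NormedSpace ℝ Y] [CompleteSpace Y]
    [TopologicalSpace.SeparableSpace Y]
    (X : Subspace ℝ Y) (hX : IsClosed (X : Set Y))
    (T : Y →L[ℝ] lp (fun _ : ℕ => Z) ∞)
    (Tn : ℕ → (Y →L[ℝ] Z)) (hTn : ∀ n y, Tn n y = (T y : ∀ _ : ℕ, Z) n)
    -- (i) T(X) ⊆ c₀(Z):
    (hTX : ∀ x ∈ X, T x ∈ c0Submodule (fun _ : ℕ => Z))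
    -- (ii) (Tₙ) is relatively compact in the strong operator topology:
    (hcpt : ∀ φ : ℕ → ℕ, StrictMono φ → ∃ ψ : ℕ → ℕ, StrictMono ψ ∧
      ∃ S : Y →L[ℝ] Z, ∀ y : Y,
        Tendsto (fun k => ‖Tn (φ (ψ k)) y - S y‖) atTop (𝓝 0)) :
    ∃ T' : Y →L[ℝ] ↥(c0Submodule (fun _ : ℕ => Z)),
      (∀ x ∈ X, (T' x : lp (fun _ : ℕ => Z) ∞) = T x) ∧ ‖T'‖ ≤ 2 * ‖T‖ :=
  stmt9_general X T Tn hTn hTX hcpt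
end

section
/- The space c_0 has the 2-SEP: for all separable Banach spaces Y, closed subspaces X ⊆ Y, and bounded linear operators T : X → c_0, there exists a bounded linear operator T̃ : Y → c_0 extending T with ‖T̃‖ ≤ 2‖T‖. -/
open Filter Topology ENNReal

/-! Sobczyk's argument. Extend each coordinate functional `e_n ∘ T` by Hahn–Banach to `F n` on `Y`
with `‖F n‖ ≤ ‖T‖`. As `Y` is separable, the weak-* ball of radius `‖T‖` is compact and metrizable,
and every weak-* cluster point of `(F n)` vanishes on `X`, because `F n → 0` pointwise on `X`.
So `F n` is asymptotically close to functionals `g n` of the same ball that vanish on `X`, and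
`F n - g n → 0` weak-*. Then `z ↦ (F n z - g n z)ₙ` is a bounded operator `Y → c₀` extending `T`
with norm at most `2 ‖T‖`. -/

open scoped Uniformity

theorem exists_seq_mem_tendsto_sub_of_mapClusterPt {K E : Type*} [TopologicalSpace K]
    [CompactSpace K] [TopologicalSpace.MetrizableSpace K] [SeminormedAddCommGroup E]
    {W : Set K} (hW : W.Nonempty) {u : ℕ → K} (hu : ∀ x, MapClusterPt x atTop u → x ∈ W) :
    ∃ v : ℕ → K, (∀ n, v n ∈ W) ∧
      ∀ f : K → E, Continuous f → Tendsto (fun n => f (u n) - f (v n)) atTop (𝓝 0) := by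
  let _ := TopologicalSpace.metrizableSpaceMetric K
  have hdist : Tendsto (fun n => Metric.infDist (u n) W) atTop (𝓝 0) := by
    have hu' : Tendsto u atTop (𝓝ˢ W) :=
      isCompact_univ.tendsto_nhdsSet_of_mapClusterPt (.of_forall fun _ => trivial)
        fun x _ hx => hu x hx
    exact ((Metric.continuous_infDist_pt W).tendsto_nhdsSet_nhds
      fun _ hx => Metric.infDist_zero_of_mem hx).comp hu'
  have hnear : ∀ n : ℕ, ∃ w ∈ W, dist (u n) w < Metric.infDist (u n) W + 1 / (n + 1) :=
    fun n => (Metric.infDist_lt_iff hW).1 (lt_add_of_pos_right _ Nat.one_div_pos_of_nat)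
  choose v hvW hv using hnear
  refine ⟨v, hvW, fun f hf => ?_⟩
  have hclose : Tendsto (fun n => (u n, v n)) atTop (𝓤 K) := by
    rw [tendsto_uniformity_iff_dist_tendsto_zero]
    refine squeeze_zero (fun _ => dist_nonneg) (fun n => (hv n).le) ?_
    simpa using hdist.add tendsto_one_div_add_atTop_nhds_zero_nat
  have hf_close := Tendsto.comp (CompactSpace.uniformContinuous_of_continuous hf) hclose
  rw [tendsto_uniformity_iff_dist_tendsto_zero] at hf_close
  simpa [tendsto_zero_iff_norm_tendsto_zero, dist_eq_norm] using hf_close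

theorem exists_seq_annihilating_tendsto_sub {𝕜 E : Type*} [NontriviallyNormedField 𝕜]
    [ProperSpace 𝕜] [SeminormedAddCommGroup E] [NormedSpace 𝕜 E]
    [TopologicalSpace.SeparableSpace E] {S : Set E} {M : ℝ} {F : ℕ → StrongDual 𝕜 E}
    (hF : ∀ n, ‖F n‖ ≤ M) (hS : ∀ x ∈ S, Tendsto (fun n => F n x) atTop (𝓝 0)) :
    ∃ g : ℕ → StrongDual 𝕜 E, (∀ n, ‖g n‖ ≤ M) ∧ (∀ n, ∀ x ∈ S, g n x = 0) ∧
      ∀ z, Tendsto (fun n => F n z - g n z) atTop (𝓝 0) := by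
  set B : Set (WeakDual 𝕜 E) := WeakDual.toStrongDual ⁻¹' Metric.closedBall 0 M
  have hB : IsCompact B := WeakDual.isCompact_closedBall 0 M
  have := isCompact_iff_compactSpace.1 hB
  have := WeakDual.metrizable_of_isCompact 𝕜 E B hB
  have hB_eval (z : E) : Continuous fun G : B => (G : WeakDual 𝕜 E) z :=
    (WeakDual.eval_continuous z).comp continuous_subtype_val
  set W : Set B := {G | ∀ x ∈ S, (G : WeakDual 𝕜 E) x = 0}
  have hW : W.Nonempty :=
    ⟨⟨0, mem_closedBall_zero_iff.2 (by simpa using (norm_nonneg _).trans (hF 0))⟩, fun _ _ => rfl⟩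
  let u : ℕ → B := fun n => ⟨StrongDual.toWeakDual (F n), mem_closedBall_zero_iff.2 (hF n)⟩
  have hu : ∀ G, MapClusterPt G atTop u → G ∈ W := by
    intro G hG x hx
    have hGx : MapClusterPt ((G : WeakDual 𝕜 E) x) atTop (fun n => F n x) :=
      hG.continuousAt_comp (hB_eval x).continuousAt
    exact eq_of_nhds_neBot (hGx.neBot.mono (inf_le_inf_left _ (hS x hx)))
  obtain ⟨v, hvW, hv⟩ := exists_seq_mem_tendsto_sub_of_mapClusterPt (E := 𝕜) hW hu
  exact ⟨fun n => WeakDual.toStrongDual (v n : WeakDual 𝕜 E),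
    fun n => mem_closedBall_zero_iff.1 (v n).2, hvW, fun z => hv _ (hB_eval z)⟩

local notation "c₀" => c0Submodule (fun _ : ℕ => ℝ)

noncomputable def c0Coord (n : ℕ) : c₀ →L[ℝ] ℝ :=
  (lp.evalCLM ℝ (fun _ : ℕ => ℝ) ∞ n).comp (Submodule.subtypeL c₀)

theorem c0Coord_apply (n : ℕ) (a : c₀) : c0Coord n a = (a : lp (fun _ : ℕ => ℝ) ∞) n := rfl

theorem c0Submodule_ext {a b : c₀} (h : ∀ n, c0Coord n a = c0Coord n b) : a = b :=
  Subtype.ext (lp.ext (funext h))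

theorem norm_c0Coord_le (n : ℕ) : ‖c0Coord n‖ ≤ 1 :=
  ContinuousLinearMap.opNorm_le_bound _ zero_le_one fun a => by
    simpa [c0Coord_apply] using
      lp.norm_apply_le_norm ENNReal.top_ne_zero (a : lp (fun _ : ℕ => ℝ) ∞) n

theorem tendsto_c0Coord (a : c₀) : Tendsto (fun n => c0Coord n a) atTop (𝓝 0) :=
  tendsto_zero_iff_norm_tendsto_zero.2 a.2

theorem exists_clm_c0Submodule_of_tendsto {Y : Type*} [SeminormedAddCommGroup Y] [NormedSpace ℝ Y]
    {C : ℝ} (h : ℕ → StrongDual ℝ Y) (hC : ∀ n, ‖h n‖ ≤ C)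
    (hlim : ∀ z, Tendsto (fun n => h n z) atTop (𝓝 0)) :
    ∃ S : Y →L[ℝ] c₀, (∀ z n, c0Coord n (S z) = h n z) ∧ ‖S‖ ≤ C := by
  have hC0 : 0 ≤ C := (norm_nonneg _).trans (hC 0)
  have hbound : ∀ z n, ‖h n z‖ ≤ C * ‖z‖ := fun z n =>
    ((h n).le_opNorm z).trans (mul_le_mul_of_nonneg_right (hC n) (norm_nonneg z))
  have hmem : ∀ z, Memℓp (fun n => h n z) ∞ := fun z =>
    memℓp_infty ⟨C * ‖z‖, by rintro _ ⟨n, rfl⟩; exact hbound z n⟩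
  let S : Y →ₗ[ℝ] c₀ :=
    { toFun := fun z => ⟨⟨fun n => h n z, hmem z⟩, tendsto_zero_iff_norm_tendsto_zero.1 (hlim z)⟩
      map_add' := fun z w => c0Submodule_ext fun n => map_add (h n) z w
      map_smul' := fun c z => c0Submodule_ext fun n => map_smul (h n) c z }
  have hS : ∀ z, ‖S z‖ ≤ C * ‖z‖ := fun z =>
    lp.norm_le_of_forall_le (by positivity) (hbound z)
  exact ⟨S.mkContinuous C hS, fun _ _ => rfl, LinearMap.mkContinuous_norm_le S hC0 hS⟩

theorem stmt12_general {Y : Type*} [NormedAddCommGroup Y] [NormedSpace ℝ Y]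
    [TopologicalSpace.SeparableSpace Y]
    (X : Subspace ℝ Y)
    (T : ↥X →L[ℝ] ↥(c0Submodule (fun _ : ℕ => ℝ))) :
    ∃ T' : Y →L[ℝ] ↥(c0Submodule (fun _ : ℕ => ℝ)),
      (∀ x : ↥X, T' (x : Y) = T x) ∧ ‖T'‖ ≤ 2 * ‖T‖ := by
  choose F hFX hFnorm using fun n => exists_extension_norm_eq X ((c0Coord n).comp T)
  have hFle : ∀ n, ‖F n‖ ≤ ‖T‖ := fun n =>
    (hFnorm n).trans_le <| (ContinuousLinearMap.opNorm_comp_le _ _).trans <|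
      mul_le_of_le_one_left (norm_nonneg T) (norm_c0Coord_le n)
  have hFX_lim : ∀ x ∈ (X : Set Y), Tendsto (fun n => F n x) atTop (𝓝 0) := fun x hx =>
    (tendsto_c0Coord (T ⟨x, hx⟩)).congr fun n => (hFX n ⟨x, hx⟩).symm
  obtain ⟨g, hg, hgX, hlim⟩ := exists_seq_annihilating_tendsto_sub hFle hFX_lim
  obtain ⟨T', hT', hT'norm⟩ := exists_clm_c0Submodule_of_tendsto (C := 2 * ‖T‖)
    (fun n => F n - g n) (fun n => (norm_sub_le _ _).trans (by linarith [hFle n, hg n])) hlim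
  refine ⟨T', fun x => c0Submodule_ext fun n => ?_, hT'norm⟩
  simp [hT', hFX, hgX n x x.2]

theorem stmt12 {Y : Type*} [NormedAddCommGroup Y] [NormedSpace ℝ Y] [CompleteSpace Y]
    [TopologicalSpace.SeparableSpace Y]
    (X : Subspace ℝ Y) (hX : IsClosed (X : Set Y))
    (T : ↥X →L[ℝ] ↥(c0Submodule (fun _ : ℕ => ℝ))) :
    ∃ T' : Y →L[ℝ] ↥(c0Submodule (fun _ : ℕ => ℝ)),
      (∀ x : ↥X, T' (x : Y) = T x) ∧ ‖T'‖ ≤ 2 * ‖T‖ :=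
  stmt12_general X T
end

section
/- Let X ⊆ Y be Banach spaces with Y/X finite-dimensional, and suppose: (i) for every ε > 0 there is a projection of the bidual Y** onto X** (identified with the weak-star closure X^{⊥⊥} of X in Y**) whose complementary projection has norm ≤ β, and (ii) Y is 1-locally reflexive in the sense that for all finite-dimensional subspaces F ⊆ Y* and G ⊆ Y** and ε > 0 there is T : G → Y with ⟨Tg, f⟩ = ⟨g, f⟩ for all g ∈ G, f ∈ F and ‖T‖ < 1 + ε. Then for every ε > 0 there is a bounded projection R of Y onto a complement of X (i.e., ker R = X) with ‖R‖ ≤ β + ε, so X is (β+ε)-cocomplemented in Y. -/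
open Filter Topology

namespace NormedSpace

noncomputable section

/-- The topological dual of a normed space (as in the older Mathlib). -/
def Dual (𝕜 : Type*) [NontriviallyNormedField 𝕜] (E : Type*) [SeminormedAddCommGroup E]
    [NormedSpace 𝕜 E] := E →L[𝕜] 𝕜

instance (𝕜 : Type*) [NontriviallyNormedField 𝕜] (E : Type*) [SeminormedAddCommGroup E]
    [NormedSpace 𝕜 E] : SeminormedAddCommGroup (Dual 𝕜 E) :=
  ContinuousLinearMap.toSeminormedAddCommGroup

instance (𝕜 : Type*) [NontriviallyNormedField 𝕜] (E : Type*) [SeminormedAddCommGroup E]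
    [NormedSpace 𝕜 E] : NormedSpace 𝕜 (Dual 𝕜 E) :=
  ContinuousLinearMap.toNormedSpace

instance (𝕜 : Type*) [NontriviallyNormedField 𝕜] (E : Type*) [SeminormedAddCommGroup E]
    [NormedSpace 𝕜 E] : FunLike (Dual 𝕜 E) E 𝕜 :=
  ContinuousLinearMap.funLike

instance (𝕜 : Type*) [NontriviallyNormedField 𝕜] (E : Type*) [SeminormedAddCommGroup E]
    [NormedSpace 𝕜 E] : ContinuousLinearMapClass (Dual 𝕜 E) 𝕜 E 𝕜 :=
  ContinuousLinearMap.continuousSemilinearMapClass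

instance (𝕜 : Type*) [NontriviallyNormedField 𝕜] (E : Type*) [NormedAddCommGroup E]
    [NormedSpace 𝕜 E] : NormedAddCommGroup (Dual 𝕜 E) :=
  ContinuousLinearMap.toNormedAddCommGroup

instance (E : Type*) [NormedAddCommGroup E] [NormedSpace ℝ E] :
    @NormedSpace ℝ (Dual ℝ E) _ NormedAddCommGroup.toSeminormedAddCommGroup :=
  ContinuousLinearMap.toNormedSpace

end

end NormedSpace

/-- The annihilator of a subspace in the continuous dual. -/
noncomputable def annih {E : Type*} [NormedAddCommGroup E] [NormedSpace ℝ E] (s : Submodule ℝ E) :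
    Submodule ℝ (NormedSpace.Dual ℝ E) where
  carrier := {f | ∀ x ∈ s, f x = 0}
  add_mem' := by
    intro f g hf hg x hx
    show f x + g x = 0
    simp [hf x hx, hg x hx]
  zero_mem' := by
    intro x hx
    rfl
  smul_mem' := by
    intro c f hf x hx
    show c • f x = 0
    simp [hf x hx]

/-! Let `J : Y → Y**` be the canonical embedding and `P = I - Q`, a projection of `Y**` with
kernel `X^⊥⊥` and norm at most `β`. Its range `G` meets `X^⊥⊥ = (X^⊥)^⊥` trivially, so it embeds
into the dual of `X^⊥ ≅ (Y/X)*` and is finite-dimensional. Local reflexivity gives `T : G → Y`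
with `‖T‖ < 1 + δ` and `J (T g) - g ∈ X^⊥⊥`, i.e. `P (J (T g)) = g`. Hence `R = T ∘ P ∘ J` is a
projection with `ker R = ker (P ∘ J) = {y | J y ∈ X^⊥⊥} = X` (as `X` is closed), and
`‖R‖ ≤ (1 + δ) β`. -/

open NormedSpace

section Annihilator

variable {E : Type*} [NormedAddCommGroup E] [NormedSpace ℝ E]

instance finiteDimensional_annih (X : Submodule ℝ E) [FiniteDimensional ℝ (E ⧸ X)] :
    FiniteDimensional ℝ (annih X) :=
  let lift : annih X →ₗ[ℝ] Module.Dual ℝ (E ⧸ X) :=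
    { toFun := fun f => X.liftQ (f : Dual ℝ E).toLinearMap f.2
      map_add' := fun _ _ => X.linearMap_qext rfl
      map_smul' := fun _ _ => X.linearMap_qext rfl }
  .of_injective lift fun _ _ hfg => Subtype.ext <| ContinuousLinearMap.ext fun x =>
    LinearMap.congr_fun hfg (Submodule.Quotient.mk x)

theorem mem_of_forall_annih_apply_eq_zero {X : Submodule ℝ E} (hX : IsClosed (X : Set E)) {x : E}
    (h : ∀ f ∈ annih X, f x = 0) : x ∈ X := by
  by_contra hx
  obtain ⟨φ, hφ⟩ := SeparatingDual.exists_ne_zero (R := ℝ)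
    (mt (Submodule.Quotient.mk_eq_zero X).mp hx)
  refine hφ (h (φ.comp X.mkQL : Dual ℝ E) fun y hy => ?_)
  show φ (Submodule.Quotient.mk y) = 0
  rw [(Submodule.Quotient.mk_eq_zero X).mpr hy, map_zero]

theorem inclusionInDoubleDual_mem_annih_annih_iff {X : Submodule ℝ E}
    (hX : IsClosed (X : Set E)) {x : E} :
    inclusionInDoubleDual ℝ E x ∈ annih (annih X) ↔ x ∈ X :=
  ⟨mem_of_forall_annih_apply_eq_zero hX, fun hx _ hf => hf x hx⟩

theorem finiteDimensional_of_disjoint_annih (V : Submodule ℝ E) [FiniteDimensional ℝ V]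
    {G : Submodule ℝ (Dual ℝ E)} (h : Disjoint G (annih V)) : FiniteDimensional ℝ G := by
  let restrict : G →ₗ[ℝ] Module.Dual ℝ V :=
    V.subtype.dualMap ∘ₗ ContinuousLinearMap.coeLM ℝ ∘ₗ G.subtype
  refine .of_injective restrict ((injective_iff_map_eq_zero _).mpr fun g hg => ?_)
  have hg' : (g : Dual ℝ E) ∈ annih V := fun x hx => LinearMap.congr_fun hg ⟨x, hx⟩
  exact Subtype.ext (Submodule.disjoint_def.mp h _ g.2 hg')

end Annihilator

namespace LinearMap.IsProj

variable {R M : Type*} [Ring R] [AddCommGroup M] [Module R M] {m : Submodule R M} {f : M →ₗ[R] M}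

theorem id_sub (hf : IsProj m f) : IsProj (ker f) (id - f) where
  map_mem x := by simp [hf.map_id _ (hf.map_mem x)]
  map_id x hx := by simpa using hx

theorem ker_id_sub (hf : IsProj m f) : ker (id - f) = m := by
  ext x
  simp [sub_eq_zero, eq_comm (a := x), hf.mem_iff_map_id]

end LinearMap.IsProj

namespace ContinuousLinearMap

variable {R E F : Type*} [Semiring R] [TopologicalSpace E] [AddCommMonoid E] [Module R E]
  [TopologicalSpace F] [AddCommMonoid F] [Module R F] {A : E →L[R] F} {T : F →L[R] E}

theorem comp_comp_self_of_leftInverse (h : Function.LeftInverse A T) :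
    (T.comp A).comp (T.comp A) = T.comp A := by
  ext x
  simp [h (A x)]

theorem ker_comp_of_leftInverse (h : Function.LeftInverse A T) :
    LinearMap.ker (T.comp A : E →ₗ[R] E) = LinearMap.ker (A : E →ₗ[R] F) :=
  LinearMap.ker_comp_of_ker_eq_bot _ (LinearMap.ker_eq_bot_of_injective h.injective)

end ContinuousLinearMap

theorem exists_projection_ker_eq_of_lift {Y : Type*} [NormedAddCommGroup Y] [NormedSpace ℝ Y]
    {X : Submodule ℝ Y} (hX : IsClosed (X : Set Y))
    {G : Submodule ℝ (Dual ℝ (Dual ℝ Y))} {P : Dual ℝ (Dual ℝ Y) →L[ℝ] Dual ℝ (Dual ℝ Y)}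
    (hP : LinearMap.IsProj G (P : Dual ℝ (Dual ℝ Y) →ₗ[ℝ] Dual ℝ (Dual ℝ Y)))
    (hPker : LinearMap.ker (P : Dual ℝ (Dual ℝ Y) →ₗ[ℝ] Dual ℝ (Dual ℝ Y)) = annih (annih X))
    (T : G →L[ℝ] Y) (hT : ∀ g : G, ∀ f ∈ annih X, (g : Dual ℝ (Dual ℝ Y)) f = f (T g)) :
    ∃ R : Y →L[ℝ] Y, R.comp R = R ∧ LinearMap.ker (R : Y →ₗ[ℝ] Y) = X ∧ ‖R‖ ≤ ‖T‖ * ‖P‖ := by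
  let J : Y →L[ℝ] Dual ℝ (Dual ℝ Y) := inclusionInDoubleDual ℝ Y
  let A : Y →L[ℝ] G := (P.comp J).codRestrict G fun y => hP.map_mem _
  have hAT : Function.LeftInverse A T := fun g => by
    have hmem : J (T g) - g ∈ annih (annih X) := fun f hf => sub_eq_zero.mpr (hT g f hf).symm
    have hJTg : P (J (T g) - g) = 0 := by
      rw [← hPker] at hmem
      exact hmem
    rw [map_sub, sub_eq_zero] at hJTg
    exact Subtype.ext (hJTg.trans (hP.map_id g g.2))
  have hAker : LinearMap.ker (A : Y →ₗ[ℝ] G) = X := by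
    ext y
    rw [LinearMap.mem_ker, ← inclusionInDoubleDual_mem_annih_annih_iff hX, ← hPker]
    exact Subtype.ext_iff
  have hAnorm : ‖A‖ ≤ ‖P‖ := A.opNorm_le_bound (norm_nonneg _) fun y => calc
    ‖A y‖ = ‖P (J y)‖ := rfl
    _ ≤ ‖P‖ * ‖J y‖ := P.le_opNorm _
    _ ≤ ‖P‖ * ‖y‖ := by gcongr; exact double_dual_bound ℝ Y y
  exact ⟨T.comp A, ContinuousLinearMap.comp_comp_self_of_leftInverse hAT,
    (ContinuousLinearMap.ker_comp_of_leftInverse hAT).trans hAker,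
    (T.opNorm_comp_le A).trans (by gcongr)⟩

theorem stmt17_general {Y : Type*} [NormedAddCommGroup Y] [NormedSpace ℝ Y]
    (X : Subspace ℝ Y) (hXclosed : IsClosed (X : Set Y)) [FiniteDimensional ℝ (Y ⧸ X)]
    (β : ℝ)
    -- (i) for every ε > 0 there is a projection of Y** onto X** ≅ X^⊥⊥ whose
    -- complementary projection has norm ≤ β:
    (hproj : ∀ ε > (0 : ℝ),
      ∃ Q : NormedSpace.Dual ℝ (NormedSpace.Dual ℝ Y) →L[ℝ]
             NormedSpace.Dual ℝ (NormedSpace.Dual ℝ Y),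
        Q.comp Q = Q ∧ (∀ F, Q F ∈ annih (annih X)) ∧ (∀ F ∈ annih (annih X), Q F = F) ∧
        ‖ContinuousLinearMap.id ℝ (NormedSpace.Dual ℝ (NormedSpace.Dual ℝ Y)) - Q‖ ≤ β)
    -- (ii) Y is 1-locally reflexive:
    (hlocref : ∀ (F : Submodule ℝ (NormedSpace.Dual ℝ Y))
        (G : Submodule ℝ (NormedSpace.Dual ℝ (NormedSpace.Dual ℝ Y))),
        FiniteDimensional ℝ F → FiniteDimensional ℝ G → ∀ ε > (0 : ℝ),
        ∃ T : ↥G →L[ℝ] Y,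
          (∀ g : ↥G, ∀ f ∈ F, (g : NormedSpace.Dual ℝ (NormedSpace.Dual ℝ Y)) f = f (T g)) ∧
          ‖T‖ < 1 + ε) :
    -- then X is (β+ε)-cocomplemented in Y:
    ∀ ε > (0 : ℝ), ∃ R : Y →L[ℝ] Y,
      R.comp R = R ∧ LinearMap.ker (R : Y →ₗ[ℝ] Y) = X ∧ ‖R‖ ≤ β + ε := by
  intro ε hε
  obtain ⟨Q, -, hQmem, hQfix, hQnorm⟩ := hproj 1 one_pos
  have hQ : LinearMap.IsProj (annih (annih X)) (Q : Dual ℝ (Dual ℝ Y) →ₗ[ℝ] Dual ℝ (Dual ℝ Y)) :=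
    ⟨hQmem, hQfix⟩
  have hGfin : FiniteDimensional ℝ (LinearMap.ker (Q : Dual ℝ (Dual ℝ Y) →ₗ[ℝ] Dual ℝ (Dual ℝ Y))) :=
    finiteDimensional_of_disjoint_annih (annih X) hQ.isCompl.symm.disjoint
  have hβ : 0 ≤ β := (norm_nonneg _).trans hQnorm
  obtain ⟨T, hT, hTnorm⟩ := hlocref (annih X) _ inferInstance hGfin (ε / (β + 1)) (by positivity)
  obtain ⟨R, hRR, hRker, hRnorm⟩ :=
    exists_projection_ker_eq_of_lift (P := ContinuousLinearMap.id ℝ _ - Q) hXclosed hQ.id_sub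
      hQ.ker_id_sub T hT
  refine ⟨R, hRR, hRker, hRnorm.trans ?_⟩
  calc ‖T‖ * ‖ContinuousLinearMap.id ℝ (Dual ℝ (Dual ℝ Y)) - Q‖
      ≤ (1 + ε / (β + 1)) * β := by gcongr
    _ = β + ε * (β / (β + 1)) := by ring
    _ ≤ β + ε * 1 := by gcongr; exact div_le_one_of_le₀ (by linarith) (by linarith)
    _ = β + ε := by ring

theorem stmt17 {Y : Type*} [NormedAddCommGroup Y] [NormedSpace ℝ Y] [CompleteSpace Y]
    (X : Subspace ℝ Y) (hXclosed : IsClosed (X : Set Y)) [FiniteDimensional ℝ (Y ⧸ X)]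
    (β : ℝ)
    -- (i) for every ε > 0 there is a projection of Y** onto X** ≅ X^⊥⊥ whose
    -- complementary projection has norm ≤ β:
    (hproj : ∀ ε > (0 : ℝ),
      ∃ Q : NormedSpace.Dual ℝ (NormedSpace.Dual ℝ Y) →L[ℝ]
             NormedSpace.Dual ℝ (NormedSpace.Dual ℝ Y),
        Q.comp Q = Q ∧ (∀ F, Q F ∈ annih (annih X)) ∧ (∀ F ∈ annih (annih X), Q F = F) ∧
        ‖ContinuousLinearMap.id ℝ (NormedSpace.Dual ℝ (NormedSpace.Dual ℝ Y)) - Q‖ ≤ β)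
    -- (ii) Y is 1-locally reflexive:
    (hlocref : ∀ (F : Submodule ℝ (NormedSpace.Dual ℝ Y))
        (G : Submodule ℝ (NormedSpace.Dual ℝ (NormedSpace.Dual ℝ Y))),
        FiniteDimensional ℝ F → FiniteDimensional ℝ G → ∀ ε > (0 : ℝ),
        ∃ T : ↥G →L[ℝ] Y,
          (∀ g : ↥G, ∀ f ∈ F, (g : NormedSpace.Dual ℝ (NormedSpace.Dual ℝ Y)) f = f (T g)) ∧
          ‖T‖ < 1 + ε) :
    -- then X is (β+ε)-cocomplemented in Y:
    ∀ ε > (0 : ℝ), ∃ R : Y →L[ℝ] Y,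
      R.comp R = R ∧ LinearMap.ker (R : Y →ₗ[ℝ] Y) = X ∧ ‖R‖ ≤ β + ε :=
  stmt17_general X hXclosed β hproj hlocref
end
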